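/- arXiv:2103.15143 — 9 statements merged into one kernel-verified Lean document; each statement's English description precedes it below -/
import Mathlib

section
/- Let V be a normed vector space over ℂ, let v₁, …, v_k ∈ V be linearly independent, let c₁, …, c_k ∈ ℂ, w₁, …, w_k ∈ ℂ, and ψ ∈ ℝ. For each j let g_j : (0, ∞) → V satisfy g_j(r) → 0 as r → 0⁺. If there exist B > 0 and δ₀ > 0 such that ‖∑_{j=1}^k c_j · exp(w_j / (r·exp(i·ψ))) · (v_j + g_j(r))‖ ≤ B for all r ∈ (0, δ₀), then c_j = 0 for every index j with Re(exp(−i·ψ)·w_j) > 0. -/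
/-!
Along the ray the `j`-th term grows like `exp(a_j / r)` with `a_j = Re(e^{-iψ} w_j)`. Let `A > 0`
be the largest `a_j` with `c_j ≠ 0` and multiply the sum by `exp(-A / r)`: the bound makes the
product tend to `0`, while the rescaled coefficients `d_j(r) = c_j exp((e^{-iψ} w_j - A) / r)`
stay bounded, so the part carrying the `g_j(r)` tends to `0` as well. Hence `∑ d_j(r) v_j → 0`,
and by linear independence every `d_j(r) → 0`; but `|d_j(r)| = |c_j|` for a term with `a_j = A`.
-/

open Filter Topology

theorem LinearIndependent.tendsto_zero_of_tendsto_sum_smul {ι 𝕜 V α : Type*} [Fintype ι]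
    [NontriviallyNormedField 𝕜] [CompleteSpace 𝕜] [NormedAddCommGroup V] [NormedSpace 𝕜 V]
    {v : ι → V} (hv : LinearIndependent 𝕜 v) {l : Filter α} {a : α → ι → 𝕜}
    (h : Tendsto (fun x => ∑ i, a x i • v i) l (𝓝 0)) (j : ι) :
    Tendsto (fun x => a x j) l (𝓝 0) := by
  have hemb := LinearMap.isClosedEmbedding_of_injective
    (LinearMap.ker_eq_bot.mpr hv.fintypeLinearCombination_injective)
  have ha : Tendsto a l (𝓝 0) := by
    rw [hemb.tendsto_nhds_iff]
    simpa [Function.comp_def, Fintype.linearCombination_apply] using h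
  exact tendsto_pi_nhds.mp ha j

section ExpSum

variable {ι α V : Type*} [Fintype ι] [NormedAddCommGroup V] [NormedSpace ℂ V]
  {v : ι → V} {c u : ι → ℂ} {l : Filter α} {t : α → ℝ} {g : ι → α → V}

theorem norm_mul_cexp_mul_ofReal (c u : ℂ) (s : ℝ) :
    ‖c * Complex.exp (u * s)‖ = ‖c‖ * Real.exp (u.re * s) := by
  rw [norm_mul, Complex.norm_exp, Complex.re_mul_ofReal]

theorem eq_zero_of_re_eq_zero_of_tendsto_sum_cexp_smul [l.NeBot] (hv : LinearIndependent ℂ v)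
    (ht : ∀ᶠ x in l, 0 ≤ t x) (hg : ∀ j, Tendsto (g j) l (𝓝 0))
    (hu : ∀ j, c j ≠ 0 → (u j).re ≤ 0)
    (hsum : Tendsto (fun x => ∑ j, (c j * Complex.exp (u j * t x)) • (v j + g j x)) l (𝓝 0))
    (j : ι) (hj : (u j).re = 0) : c j = 0 := by
  set d : α → ι → ℂ := fun x j => c j * Complex.exp (u j * t x)
  have hd_bdd : ∀ j, IsBoundedUnder (· ≤ ·) l (norm ∘ fun x => d x j) := fun j =>
    isBoundedUnder_of_eventually_le (a := ‖c j‖) <| ht.mono fun x hx => by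
      rw [Function.comp_apply, norm_mul_cexp_mul_ofReal]
      by_cases hc : c j = 0
      · simp [hc]
      · exact mul_le_of_le_one_right (norm_nonneg _)
          (Real.exp_le_one_iff.mpr (mul_nonpos_of_nonpos_of_nonneg (hu j hc) hx))
  have hgpart : Tendsto (fun x => ∑ j, d x j • g j x) l (𝓝 0) := by
    simpa using tendsto_finsetSum Finset.univ fun j _ => (hd_bdd j).smul_tendsto_zero (hg j)
  have hvpart : Tendsto (fun x => ∑ j, d x j • v j) l (𝓝 0) := by
    simpa [d, smul_add, Finset.sum_add_distrib] using hsum.sub hgpart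
  have hnorm := (hv.tendsto_zero_of_tendsto_sum_smul hvpart j).norm
  simp only [d, norm_mul_cexp_mul_ofReal, hj, zero_mul, Real.exp_zero, mul_one, norm_zero] at hnorm
  exact norm_eq_zero.mp (tendsto_nhds_unique tendsto_const_nhds hnorm)

theorem eq_zero_of_re_pos_of_norm_sum_cexp_smul_le [l.NeBot] (hv : LinearIndependent ℂ v)
    (ht : Tendsto t l atTop) (hg : ∀ j, Tendsto (g j) l (𝓝 0)) (B : ℝ)
    (hbound : ∀ᶠ x in l, ‖∑ j, (c j * Complex.exp (u j * t x)) • (v j + g j x)‖ ≤ B)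
    (j : ι) (hj : 0 < (u j).re) : c j = 0 := by
  by_contra hcj
  obtain ⟨j₁, hcj₁, hj₁⟩ := Finset.exists_max_image {i | c i ≠ 0} (fun i => (u i).re)
    ⟨j, by simpa using hcj⟩
  simp only [Finset.mem_filter, Finset.mem_univ, true_and] at hcj₁ hj₁
  set A := (u j₁).re
  have hA : 0 < A := hj.trans_le (hj₁ j hcj)
  have hsum : Tendsto
      (fun x => ∑ i, (c i * Complex.exp ((u i - A) * t x)) • (v i + g i x)) l (𝓝 0) := by
    have hexp : Tendsto (fun x => Real.exp (-A * t x) * B) l (𝓝 0) := by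
      simpa using (Real.tendsto_exp_atBot.comp
        (ht.const_mul_atTop_of_neg (neg_neg_of_pos hA))).mul_const B
    refine squeeze_zero_norm' (hbound.mono fun x hx => ?_) hexp
    have hrescale : ∑ i, (c i * Complex.exp ((u i - A) * t x)) • (v i + g i x) =
        Complex.exp (-A * t x) • ∑ i, (c i * Complex.exp (u i * t x)) • (v i + g i x) := by
      simp only [Finset.smul_sum, smul_smul]
      congr! 2 with i
      rw [mul_left_comm, ← Complex.exp_add]
      ring_nf
    rw [hrescale, norm_smul, ← Complex.ofReal_neg, ← Complex.ofReal_mul, Complex.norm_exp_ofReal]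
    exact mul_le_mul_of_nonneg_left hx (Real.exp_nonneg _)
  exact hcj₁ (eq_zero_of_re_eq_zero_of_tendsto_sum_cexp_smul hv (ht.eventually_ge_atTop 0) hg
    (fun i hi => by simpa using hj₁ i hi) hsum j₁ (by simp [A]))

end ExpSum

theorem stmt_1_general {V : Type*} [NormedAddCommGroup V] [NormedSpace ℂ V]
    {k : ℕ} {v : Fin k → V} (hv : LinearIndependent ℂ v)
    (c w : Fin k → ℂ) (ψ : ℝ) (g : Fin k → ℝ → V)
    (hg : ∀ j, Filter.Tendsto (g j) (nhdsWithin 0 (Set.Ioi 0)) (nhds 0))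
    (B δ₀ : ℝ) (hδ₀ : 0 < δ₀)
    (hbound : ∀ r ∈ Set.Ioo (0 : ℝ) δ₀,
      ‖∑ j, (c j * Complex.exp (w j / ((r : ℂ) * Complex.exp (Complex.I * (ψ : ℂ)))))
        • (v j + g j r)‖ ≤ B) :
    ∀ j, 0 < (Complex.exp (-Complex.I * (ψ : ℂ)) * w j).re → c j = 0 := by
  have hray : ∀ (r : ℝ) j, w j / ((r : ℂ) * Complex.exp (Complex.I * ψ)) =
      Complex.exp (-Complex.I * ψ) * w j * ((r⁻¹ : ℝ) : ℂ) := fun r j => by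
    rw [neg_mul, Complex.exp_neg, Complex.ofReal_inv]
    field_simp
  refine eq_zero_of_re_pos_of_norm_sum_cexp_smul_le hv tendsto_inv_nhdsGT_zero hg B ?_
  filter_upwards [Ioo_mem_nhdsGT hδ₀] with r hr
  simpa only [hray] using hbound r hr

/-- If a finite sum `∑ c_j · exp(w_j / (r·e^{iψ})) · (v_j + g_j(r))`
(with `v_j` linearly independent and `g_j(r) → 0` as `r → 0⁺`) stays bounded for
`r ∈ (0, δ₀)`, then `c_j = 0` for every `j` with `Re(e^{-iψ} w_j) > 0`. -/
theorem stmt_1 {V : Type*} [NormedAddCommGroup V] [NormedSpace ℂ V]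
    {k : ℕ} {v : Fin k → V} (hv : LinearIndependent ℂ v)
    (c w : Fin k → ℂ) (ψ : ℝ) (g : Fin k → ℝ → V)
    (hg : ∀ j, Filter.Tendsto (g j) (nhdsWithin 0 (Set.Ioi 0)) (nhds 0))
    (B δ₀ : ℝ) (hB : 0 < B) (hδ₀ : 0 < δ₀)
    (hbound : ∀ r ∈ Set.Ioo (0 : ℝ) δ₀,
      ‖∑ j, (c j * Complex.exp (w j / ((r : ℂ) * Complex.exp (Complex.I * (ψ : ℂ)))))
        • (v j + g j r)‖ ≤ B) :
    ∀ j, 0 < (Complex.exp (-Complex.I * (ψ : ℂ)) * w j).re → c j = 0 :=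
  stmt_1_general hv c w ψ g hg B δ₀ hδ₀ hbound
end

section
/- Let V be a normed vector space over ℂ, let Ψ₁, …, Ψ_s ∈ V be linearly independent, let u₁, …, u_s ∈ ℂ, φ ∈ ℝ, ε > 0, let i ∈ {1, …, s} be a fixed index, and let k₁, …, k_s ∈ ℂ. For each j, let g_j be a V-valued function of (r, θ) ∈ (0, ∞) × (φ − π/2 − ε, φ + π/2 + ε) such that g_j(r, θ) → 0 as r → 0⁺, uniformly in θ. Suppose that ∑_{j=1}^s k_j · exp((u_i − u_j)/(r·exp(i·θ))) · (Ψ_j + g_j(r, θ)) converges to Ψ_i as r → 0⁺, uniformly for θ ∈ (φ − π/2 − ε, φ + π/2 + ε). Then k_j = δ_{ij} for all j (i.e. k_i = 1 and k_j = 0 for j ≠ i). -/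
/-!
Fix a direction `θ` of the sector. Since the sector is wider than a half-plane, whenever
`u j ≠ u i` some `θ` makes `Re ((u i - u j) e^{-iθ}) > 0`, i.e. the `j`-th exponential blows up as
`r → 0⁺`. Dividing the sum by the fastest-growing exponential among the terms with nonzero
coefficient leaves a combination of the `Ψ l` whose leading coefficient is constant while the
combination tends to `0`; as an injective linear map out of a finite-dimensional space is an
embedding, this contradicts linear independence. So `k j = 0` unless `u j = u i`, the surviving
exponentials are `1`, and letting `r → 0⁺` at `θ = φ` gives `∑ k j • Ψ j = Ψ i`.
-/

open Real Filter Topology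

theorem LinearIndependent.tendsto_coeffs_iff {𝕜 ι V α : Type*} [NontriviallyNormedField 𝕜]
    [CompleteSpace 𝕜] [Fintype ι] [NormedAddCommGroup V] [NormedSpace 𝕜 V] {Ψ : ι → V}
    (hΨ : LinearIndependent 𝕜 Ψ) {c : α → ι → 𝕜} {l : Filter α} {c₀ : ι → 𝕜} :
    Tendsto c l (𝓝 c₀) ↔ Tendsto (fun a ↦ ∑ j, c a j • Ψ j) l (𝓝 (∑ j, c₀ j • Ψ j)) := by
  have hemb := LinearMap.isClosedEmbedding_of_injective
    (LinearMap.ker_eq_bot.mpr hΨ.fintypeLinearCombination_injective)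
  simpa [Function.comp_def, Fintype.linearCombination_apply] using
    hemb.isInducing.tendsto_nhds_iff (f := c) (l := l) (y := c₀)

theorem Complex.tendsto_exp_neg_div_nhdsGT_zero {z : ℂ} (hz : 0 < z.re) :
    Tendsto (fun r : ℝ ↦ Complex.exp (-z / r)) (𝓝[>] 0) (𝓝 0) := by
  rw [tendsto_zero_iff_norm_tendsto_zero]
  have hre : ∀ r : ℝ, (-z / r).re = -z.re * r⁻¹ := fun r ↦ by
    rw [Complex.div_ofReal_re, Complex.neg_re, div_eq_mul_inv]
  simp only [Complex.norm_exp, hre]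
  exact Real.tendsto_exp_atBot.comp
    (tendsto_inv_nhdsGT_zero.const_mul_atTop_of_neg (neg_neg_of_pos hz))

theorem coeff_eq_zero_of_tendsto_sum_exp_div {ι V : Type*} [Fintype ι] [NormedAddCommGroup V]
    [NormedSpace ℂ V] {Ψ : ι → V} (hΨ : LinearIndependent ℂ Ψ) {a w : ι → ℂ}
    {g : ι → ℝ → V} (hg : ∀ l, Tendsto (g l) (𝓝[>] 0) (𝓝 0)) {v : V}
    (hv : Tendsto (fun r : ℝ ↦ ∑ l, (a l * Complex.exp (w l / r)) • (Ψ l + g l r)) (𝓝[>] 0) (𝓝 v))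
    {j : ι} (hj : 0 < (w j).re) : a j = 0 := by
  classical
  by_contra haj
  obtain ⟨m, hm, hmax⟩ := (Finset.univ.filter (a · ≠ 0)).exists_max_image (fun l ↦ (w l).re)
    ⟨j, by simpa using haj⟩
  have ham : a m ≠ 0 := by simpa using hm
  have hwm : 0 < (w m).re := hj.trans_le (hmax j (by simpa using haj))
  set d : ℝ → ι → ℂ := fun r l ↦ a l * Complex.exp ((w l - w m) / r)
  have hd_le : ∀ᶠ r in 𝓝[>] (0 : ℝ), ∀ l, ‖d r l‖ ≤ ‖a l‖ := by
    filter_upwards [self_mem_nhdsWithin] with r (hr : 0 < r) l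
    by_cases hal : a l = 0
    · simp [d, hal]
    rw [norm_mul, Complex.norm_exp, Complex.div_ofReal_re, Complex.sub_re]
    refine mul_le_of_le_one_right (norm_nonneg _) (Real.exp_le_one_iff.mpr ?_)
    exact div_nonpos_of_nonpos_of_nonneg (sub_nonpos.mpr (hmax l (by simpa using hal))) hr.le
  have hrescale : ∀ r : ℝ,
      Complex.exp (-w m / r) • ∑ l, (a l * Complex.exp (w l / r)) • (Ψ l + g l r)
        = ∑ l, d r l • Ψ l + ∑ l, d r l • g l r := by
    intro r
    rw [Finset.smul_sum, ← Finset.sum_add_distrib]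
    refine Finset.sum_congr rfl fun l _ ↦ ?_
    rw [smul_smul, ← smul_add]
    congr 1
    dsimp only [d]
    rw [sub_div, sub_eq_neg_add, Complex.exp_add, neg_div]
    ring
  have hlead : Tendsto (fun r : ℝ ↦ ∑ l, d r l • Ψ l + ∑ l, d r l • g l r) (𝓝[>] 0) (𝓝 0) := by
    simpa only [hrescale, zero_smul] using
      (Complex.tendsto_exp_neg_div_nhdsGT_zero hwm).smul hv
  have herr : Tendsto (fun r : ℝ ↦ ∑ l, d r l • g l r) (𝓝[>] 0) (𝓝 0) := by
    simpa using tendsto_finsetSum Finset.univ fun l _ ↦ IsBoundedUnder.smul_tendsto_zero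
      (isBoundedUnder_of_eventually_le (hd_le.mono fun r hr ↦ hr l)) (hg l)
  have hcoeffs : Tendsto d (𝓝[>] 0) (𝓝 0) := by
    rw [hΨ.tendsto_coeffs_iff]
    simpa using hlead.sub herr
  have hdm : (fun r ↦ d r m) = fun _ ↦ a m := by
    funext r
    simp [d]
  exact ham (tendsto_const_nhds_iff.mp (hdm ▸ tendsto_pi_nhds.mp hcoeffs m))

theorem Complex.re_mul_exp_neg_I_mul (z : ℂ) (t : ℝ) :
    (z * Complex.exp (-(Complex.I * t))).re = z.re * Real.cos t + z.im * Real.sin t := by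
  rw [show -(Complex.I * t) = ((-t : ℝ) : ℂ) * Complex.I by push_cast; ring, Complex.mul_re,
    Complex.exp_ofReal_mul_I_re, Complex.exp_ofReal_mul_I_im, Real.cos_neg, Real.sin_neg]
  ring

theorem exists_mem_Ioo_re_mul_exp_pos {z : ℂ} (hz : z ≠ 0) {ε : ℝ} (hε : 0 < ε) :
    ∃ t ∈ Set.Ioo (-(π/2) - ε) (π/2 + ε), 0 < (z * Complex.exp (-(Complex.I * t))).re := by
  simp only [Complex.re_mul_exp_neg_I_mul]
  obtain ⟨η, hη, hηε, hηπ⟩ : ∃ η, 0 < η ∧ η < ε ∧ η < π / 2 :=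
    ⟨min ε 1 / 2, by positivity, by linarith [min_le_left ε 1],
      by linarith [min_le_right ε 1, pi_gt_three]⟩
  have hsin : 0 < Real.sin η := Real.sin_pos_of_pos_of_lt_pi hη (by linarith)
  have hcos : 0 < Real.cos η := Real.cos_pos_of_mem_Ioo ⟨by linarith, hηπ⟩
  have hz' : z.re ≠ 0 ∨ z.im ≠ 0 := by
    by_contra! h; exact hz (Complex.ext h.1 h.2)
  -- `t = 0` if `0 < z.re`, otherwise turn by a little more than a right angle towards `z.im`
  rcases lt_or_ge 0 z.re with hre | hre
  · exact ⟨0, ⟨by linarith [pi_pos], by linarith [pi_pos]⟩, by simpa using hre⟩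
  rcases le_total 0 z.im with him | him
  · refine ⟨η + π/2, ⟨by linarith [pi_pos], by linarith⟩, ?_⟩
    rw [Real.cos_add_pi_div_two, Real.sin_add_pi_div_two]
    rcases hz' with h | h
    · nlinarith [lt_of_le_of_ne hre h]
    · nlinarith [lt_of_le_of_ne him h.symm]
  · refine ⟨-(η + π/2), ⟨by linarith, by linarith [pi_pos]⟩, ?_⟩
    rw [Real.cos_neg, Real.sin_neg, Real.cos_add_pi_div_two, Real.sin_add_pi_div_two]
    rcases hz' with h | h
    · nlinarith [lt_of_le_of_ne hre h]
    · nlinarith [lt_of_le_of_ne him h]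

theorem exists_mem_sector_re_mul_exp_pos {z : ℂ} (hz : z ≠ 0) (φ : ℝ) {ε : ℝ} (hε : 0 < ε) :
    ∃ θ ∈ Set.Ioo (φ - π/2 - ε) (φ + π/2 + ε), 0 < (z * Complex.exp (-(Complex.I * θ))).re := by
  obtain ⟨t, ⟨ht₁, ht₂⟩, hpos⟩ := exists_mem_Ioo_re_mul_exp_pos
    (mul_ne_zero hz (Complex.exp_ne_zero (-(Complex.I * φ)))) hε
  refine ⟨φ + t, ⟨by linarith, by linarith⟩, ?_⟩
  rwa [Complex.ofReal_add, mul_add, neg_add, Complex.exp_add, ← mul_assoc]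

theorem tendsto_nhdsGT_zero_of_forall_Ioo {β V : Type*} [SeminormedAddCommGroup V]
    {F : ℝ → β → V} {S : Set β} {v : V}
    (h : ∀ ε' > (0 : ℝ), ∃ δ > (0 : ℝ), ∀ r ∈ Set.Ioo (0 : ℝ) δ, ∀ θ ∈ S, ‖F r θ - v‖ < ε')
    {θ : β} (hθ : θ ∈ S) : Tendsto (F · θ) (𝓝[>] 0) (𝓝 v) := by
  rw [Metric.tendsto_nhds]
  intro ε' hε'
  obtain ⟨δ, hδ, hF⟩ := h ε' hε'
  filter_upwards [Ioo_mem_nhdsGT hδ] with r hr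
  rw [dist_eq_norm]
  exact hF r hr θ hθ

/-- (Analytic content of Lemma 2.3 of the paper.) If
`∑_j k_j · exp((u_i − u_j)/(r e^{iθ})) · (Ψ_j + g_j(r,θ)) → Ψ_i` as `r → 0⁺`, uniformly
for `θ` in the sector `(φ − π/2 − ε, φ + π/2 + ε)`, with `Ψ_j` linearly independent and
`g_j(r,θ) → 0` uniformly in `θ`, then `k_j = δ_{ij}`. -/
theorem stmt_2 {V : Type*} [NormedAddCommGroup V] [NormedSpace ℂ V]
    {s : ℕ} {Ψ : Fin s → V} (hΨ : LinearIndependent ℂ Ψ)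
    (u : Fin s → ℂ) (φ ε : ℝ) (hε : 0 < ε) (i : Fin s) (k : Fin s → ℂ)
    (g : Fin s → ℝ → ℝ → V)
    (hg : ∀ j, ∀ ε' > (0 : ℝ), ∃ δ > (0 : ℝ), ∀ r ∈ Set.Ioo (0 : ℝ) δ,
      ∀ θ ∈ Set.Ioo (φ - π/2 - ε) (φ + π/2 + ε), ‖g j r θ‖ < ε')
    (hconv : ∀ ε' > (0 : ℝ), ∃ δ > (0 : ℝ), ∀ r ∈ Set.Ioo (0 : ℝ) δ,
      ∀ θ ∈ Set.Ioo (φ - π/2 - ε) (φ + π/2 + ε),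
      ‖(∑ j, (k j * Complex.exp ((u i - u j) / ((r : ℂ) * Complex.exp (Complex.I * (θ : ℂ)))))
          • (Ψ j + g j r θ)) - Ψ i‖ < ε') :
    ∀ j, k j = if j = i then 1 else 0 := by
  have hgθ : ∀ j, ∀ θ ∈ Set.Ioo (φ - π/2 - ε) (φ + π/2 + ε),
      Tendsto (g j · θ) (𝓝[>] 0) (𝓝 0) := fun j _ hθ ↦
    tendsto_nhdsGT_zero_of_forall_Ioo (F := g j) (v := 0) (by simpa using hg j) hθ
  have hzero : ∀ j, u j ≠ u i → k j = 0 := by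
    intro j hj
    obtain ⟨θ, hθ, hpos⟩ := exists_mem_sector_re_mul_exp_pos (sub_ne_zero.mpr hj.symm) φ hε
    refine coeff_eq_zero_of_tendsto_sum_exp_div hΨ
      (w := fun l ↦ (u i - u l) * Complex.exp (-(Complex.I * θ))) (fun l ↦ hgθ l θ hθ)
      ((tendsto_nhdsGT_zero_of_forall_Ioo hconv hθ).congr fun r ↦ ?_) hpos
    simp only [Complex.exp_neg, div_mul_eq_div_div_swap, ← div_eq_mul_inv]
  have hφ : φ ∈ Set.Ioo (φ - π/2 - ε) (φ + π/2 + ε) := ⟨by linarith [pi_pos], by linarith [pi_pos]⟩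
  have hsum : ∑ j, k j • Ψ j = Ψ i := by
    have hlim : Tendsto (fun r ↦ ∑ j, k j • (Ψ j + g j r φ)) (𝓝[>] 0) (𝓝 (Ψ i)) :=
      (tendsto_nhdsGT_zero_of_forall_Ioo hconv hφ).congr fun r ↦ Finset.sum_congr rfl fun l _ ↦ by
        by_cases hl : u l = u i
        · simp [hl]
        · simp [hzero l hl]
    have hlim' : Tendsto (fun r ↦ ∑ j, k j • (Ψ j + g j r φ)) (𝓝[>] 0) (𝓝 (∑ j, k j • (Ψ j + 0))) :=
      tendsto_finsetSum _ fun j _ ↦ (tendsto_const_nhds.add (hgθ j φ hφ)).const_smul (k j)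
    simpa using tendsto_nhds_unique hlim' hlim
  have hk : k = Pi.single i 1 := hΨ.fintypeLinearCombination_injective <| by
    simp [Fintype.linearCombination_apply, hsum]
  simp [hk, Pi.single_apply]
end

section
/- Let u ∈ ℂ and let φ, φ′ ∈ ℝ with φ < φ′ and φ′ − φ < π. Let f : ℂ → ℂ be holomorphic on an open set containing the closed sector S = {u + r·exp(i·θ) : r ≥ 0, φ ≤ θ ≤ φ′}, and assume there exist c > 0 and m ∈ ℕ such that |f(λ)| ≤ c·(1 + |λ|)^m for all λ ∈ S. Then for every z ∈ ℂ \ {0} with Re(exp(i·φ)/z) > 0 and Re(exp(i·φ′)/z) > 0, the integrals ∫₀^∞ f(u + t·exp(i·φ)) · exp(−(u + t·exp(i·φ))/z) · exp(i·φ) dt and ∫₀^∞ f(u + t·exp(i·φ′)) · exp(−(u + t·exp(i·φ′))/z) · exp(i·φ′) dt both converge absolutely and are equal. -/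
/-!
Put `g λ = f λ e^{-λ/z}`. Under `w ↦ u + e^w` the sector becomes the strip `φ ≤ Im w ≤ φ'`, and
the two Laplace integrals become the integrals of `F w = g (u + e^w) e^w` along its boundary
lines. Cauchy's theorem on the rectangles `[-R, R] × [φ, φ']` equates these up to the two vertical
sides, which are arcs of radius `e^{±R}` about `u`. On the circle of radius `t`, `g` is bounded
by `C (1 + t)^m e^{-δ t}`, where `δ > 0` is the minimum of `Re (e^{iθ}/z)` over `[φ, φ']`; it is
positive because `φ' - φ < π` makes every `e^{iθ}` a nonnegative combination of `e^{iφ}` and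
`e^{iφ'}`. So the arcs contribute `O(e^{±R} (1 + e^{±R})^m e^{-δ e^{±R}}) → 0`.
-/

open MeasureTheory Complex Filter Set Topology intervalIntegral
open scoped Interval

section StripShift

variable {E : Type*} [NormedAddCommGroup E] [NormedSpace ℂ E]

theorem integral_add_mul_I_eq_of_differentiableOn_strip {F : ℂ → E} {a b : ℝ}
    (hF : DifferentiableOn ℂ F (im ⁻¹' [[a, b]]))
    (ha : Integrable fun x : ℝ => F (x + a * I)) (hb : Integrable fun x : ℝ => F (x + b * I))
    (h_top : Tendsto (fun x : ℝ => ∫ y in a..b, F (x + y * I)) atTop (𝓝 0))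
    (h_bot : Tendsto (fun x : ℝ => ∫ y in a..b, F (x + y * I)) atBot (𝓝 0)) :
    ∫ x : ℝ, F (x + a * I) = ∫ x : ℝ, F (x + b * I) := by
  have h_rect : ∀ R : ℝ, (∫ x in -R..R, F (x + a * I)) - (∫ x in -R..R, F (x + b * I)) +
      I • (∫ y in a..b, F (R + y * I)) - I • (∫ y in a..b, F ((-R : ℝ) + y * I)) = 0 := by
    intro R
    simpa using integral_boundary_rect_eq_zero_of_differentiableOn F (-R + a * I) (R + b * I)
      (hF.mono fun w hw => by simpa using hw.2)
  have h_lim := (((intervalIntegral_tendsto_integral ha tendsto_neg_atTop_atBot tendsto_id).sub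
    (intervalIntegral_tendsto_integral hb tendsto_neg_atTop_atBot tendsto_id)).add
    (h_top.const_smul I)).sub ((h_bot.comp tendsto_neg_atTop_atBot).const_smul I)
  simp only [id, Function.comp_def, h_rect, smul_zero, add_zero, sub_zero] at h_lim
  exact sub_eq_zero.mp (tendsto_nhds_unique h_lim tendsto_const_nhds)

end StripShift

section ExpSubstitution

variable {E : Type*} [NormedAddCommGroup E] [NormedSpace ℝ E]

theorem integrable_exp_smul_comp_exp_iff (g : ℝ → E) :
    Integrable (fun x => Real.exp x • g (Real.exp x)) ↔ IntegrableOn g (Ioi 0) := by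
  rw [← Real.range_exp, ← image_univ, integrableOn_image_iff_integrableOn_abs_deriv_smul
    MeasurableSet.univ (fun x _ => (Real.hasDerivAt_exp x).hasDerivWithinAt)
    Real.exp_injective.injOn]
  simp [abs_of_pos (Real.exp_pos _)]

theorem integral_exp_smul_comp_exp (g : ℝ → E) :
    ∫ x, Real.exp x • g (Real.exp x) = ∫ y in Ioi 0, g y := by
  rw [← Real.range_exp, ← image_univ, integral_image_eq_integral_abs_deriv_smul
    MeasurableSet.univ (fun x _ => (Real.hasDerivAt_exp x).hasDerivWithinAt)
    Real.exp_injective.injOn]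
  simp [abs_of_pos (Real.exp_pos _)]

end ExpSubstitution

def sector (u : ℂ) (φ φ' : ℝ) : Set ℂ :=
  {lam | ∃ r θ : ℝ, 0 ≤ r ∧ φ ≤ θ ∧ θ ≤ φ' ∧ lam = u + r * exp (I * θ)}

theorem exp_ofReal_add_ofReal_mul_I (x θ : ℝ) : exp (x + θ * I) = Real.exp x * exp (I * θ) := by
  rw [exp_add, ofReal_exp, mul_comm (θ : ℂ)]

theorem add_exp_mem_sector (u : ℂ) {φ φ' : ℝ} {w : ℂ} (hw : w.im ∈ Icc φ φ') :
    u + exp w ∈ sector u φ φ' :=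
  ⟨Real.exp w.re, w.im, (Real.exp_pos _).le, hw.1, hw.2,
    by rw [← exp_ofReal_add_ofReal_mul_I, re_add_im]⟩

section Sector

variable {g : ℂ → ℂ} {u : ℂ} {φ φ' : ℝ} {B : ℝ → ℝ}

theorem integrableOn_Ioi_ray (hg : ContinuousOn g (sector u φ φ')) {θ : ℝ} (hθ : θ ∈ Icc φ φ')
    (hgB : ∀ t : ℝ, 0 < t → ‖g (u + t * exp (I * θ))‖ ≤ B t) (hB : IntegrableOn B (Ioi 0)) :
    IntegrableOn (fun t : ℝ => g (u + t * exp (I * θ)) * exp (I * θ)) (Ioi 0) := by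
  have h_cont : ContinuousOn (fun t : ℝ => g (u + t * exp (I * θ))) (Ioi 0) :=
    hg.comp (by fun_prop) fun t ht => ⟨t, θ, le_of_lt ht, hθ.1, hθ.2, rfl⟩
  refine (hB.mono' (h_cont.aestronglyMeasurable measurableSet_Ioi) ?_).mul_const _
  exact (ae_restrict_iff' measurableSet_Ioi).2 (Eventually.of_forall hgB)

theorem integral_ray_eq_of_differentiableOn_sector (hφ : φ ≤ φ')
    (hg : DifferentiableOn ℂ g (sector u φ φ'))
    (hgB : ∀ θ ∈ Icc φ φ', ∀ t : ℝ, 0 < t → ‖g (u + t * exp (I * θ))‖ ≤ B t)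
    (hB : IntegrableOn B (Ioi 0)) (hB_zero : Tendsto (fun t => t * B t) (𝓝[>] 0) (𝓝 0))
    (hB_top : Tendsto (fun t => t * B t) atTop (𝓝 0)) :
    ∫ t in Ioi (0 : ℝ), g (u + t * exp (I * φ)) * exp (I * φ) =
      ∫ t in Ioi (0 : ℝ), g (u + t * exp (I * φ')) * exp (I * φ') := by
  set F : ℂ → ℂ := fun w => g (u + exp w) * exp w
  have hF_line (x θ : ℝ) :
      F (x + θ * I) = Real.exp x • (g (u + Real.exp x * exp (I * θ)) * exp (I * θ)) := by
    simp only [F, exp_ofReal_add_ofReal_mul_I, real_smul]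
    ring
  have hF_integral (θ : ℝ) (hθ : θ ∈ Icc φ φ') :
      Integrable (fun x : ℝ => F (x + θ * I)) ∧
        ∫ x : ℝ, F (x + θ * I) = ∫ t in Ioi (0 : ℝ), g (u + t * exp (I * θ)) * exp (I * θ) := by
    simp only [hF_line]
    exact ⟨(integrable_exp_smul_comp_exp_iff _).2
        (integrableOn_Ioi_ray hg.continuousOn hθ (hgB θ hθ) hB),
      integral_exp_smul_comp_exp fun t : ℝ => g (u + t * exp (I * θ)) * exp (I * θ)⟩
  have hF_vert (x : ℝ) :
      ‖∫ y in φ..φ', F (x + y * I)‖ ≤ Real.exp x * B (Real.exp x) * |φ' - φ| := by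
    refine norm_integral_le_of_norm_le_const fun y hy => ?_
    rw [uIoc_of_le hφ] at hy
    rw [hF_line, norm_smul, Real.norm_of_nonneg (Real.exp_pos x).le, norm_mul,
      norm_exp_I_mul_ofReal, mul_one]
    exact mul_le_mul_of_nonneg_left (hgB y (Ioc_subset_Icc_self hy) _ (Real.exp_pos x))
      (Real.exp_pos x).le
  have hF_diff : DifferentiableOn ℂ F (im ⁻¹' [[φ, φ']]) := by
    rw [uIcc_of_le hφ]
    exact (hg.comp (by fun_prop) fun w hw => add_exp_mem_sector u hw).mul (by fun_prop)
  rw [← (hF_integral φ ⟨le_rfl, hφ⟩).2, ← (hF_integral φ' ⟨hφ, le_rfl⟩).2]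
  refine integral_add_mul_I_eq_of_differentiableOn_strip hF_diff (hF_integral φ ⟨le_rfl, hφ⟩).1
    (hF_integral φ' ⟨hφ, le_rfl⟩).1 ?_ ?_
  · exact squeeze_zero_norm hF_vert
      (by simpa using (hB_top.comp Real.tendsto_exp_atTop).mul_const |φ' - φ|)
  · exact squeeze_zero_norm hF_vert
      (by simpa using (hB_zero.comp Real.tendsto_exp_atBot_nhdsGT).mul_const |φ' - φ|)

end Sector

theorem re_exp_I_mul_mul (θ : ℝ) (w : ℂ) :
    (exp (I * θ) * w).re = w.re * Real.cos θ - w.im * Real.sin θ := by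
  rw [mul_comm I, exp_mul_I, ← ofReal_cos, ← ofReal_sin]
  simp only [mul_re, add_re, add_im, ofReal_re, ofReal_im, mul_I_im, I_re]
  ring

theorem re_exp_I_mul_mul_pos_of_mem_Icc {φ φ' θ : ℝ} (hπ : φ' - φ < Real.pi)
    (hθ : θ ∈ Icc φ φ') {w : ℂ} (h₁ : 0 < (exp (I * φ) * w).re)
    (h₂ : 0 < (exp (I * φ') * w).re) : 0 < (exp (I * θ) * w).re := by
  rcases hθ.2.lt_or_eq with hθφ' | rfl
  · -- `sin (φ' - φ) • e^{iθ} = sin (φ' - θ) • e^{iφ} + sin (θ - φ) • e^{iφ'}`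
    have h_comb : Real.sin (φ' - φ) * (exp (I * θ) * w).re =
        Real.sin (φ' - θ) * (exp (I * φ) * w).re + Real.sin (θ - φ) * (exp (I * φ') * w).re := by
      simp only [re_exp_I_mul_mul, Real.sin_sub]
      ring
    refine pos_of_mul_pos_right (a := Real.sin (φ' - φ)) ?_
      (Real.sin_nonneg_of_nonneg_of_le_pi (by linarith [hθ.1]) hπ.le)
    rw [h_comb]
    exact add_pos_of_pos_of_nonneg
      (mul_pos (Real.sin_pos_of_pos_of_lt_pi (by linarith) (by linarith [hθ.1])) h₁)
      (mul_nonneg (Real.sin_nonneg_of_nonneg_of_le_pi (by linarith [hθ.1]) (by linarith)) h₂.le)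
  · exact h₂

theorem exists_pos_forall_le_re_exp_I_mul_mul {φ φ' : ℝ} (hφ : φ ≤ φ') (hπ : φ' - φ < Real.pi)
    {w : ℂ} (h₁ : 0 < (exp (I * φ) * w).re) (h₂ : 0 < (exp (I * φ') * w).re) :
    ∃ δ > 0, ∀ θ ∈ Icc φ φ', δ ≤ (exp (I * θ) * w).re := by
  obtain ⟨θ₀, hθ₀, h_min⟩ := isCompact_Icc.exists_isMinOn (nonempty_Icc.2 hφ)
    (Continuous.continuousOn (f := fun θ : ℝ => (exp (I * θ) * w).re) (by fun_prop))
  exact ⟨_, re_exp_I_mul_mul_pos_of_mem_Icc hπ hθ₀ h₁ h₂, fun θ hθ => h_min hθ⟩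

theorem norm_mul_exp_neg_div_le {f : ℂ → ℂ} {c : ℝ} (hc : 0 ≤ c) {m : ℕ} {u z : ℂ}
    {θ δ t : ℝ} (ht : 0 ≤ t)
    (hf : ‖f (u + t * exp (I * θ))‖ ≤ c * (1 + ‖u + t * exp (I * θ)‖) ^ m)
    (hδ : δ ≤ (exp (I * θ) / z).re) :
    ‖f (u + t * exp (I * θ)) * exp (-(u + t * exp (I * θ)) / z)‖ ≤
      c * (1 + ‖u‖) ^ m * Real.exp (-(u / z).re) * ((1 + t) ^ m * Real.exp (-(δ * t))) := by
  have h_norm : ‖u + t * exp (I * θ)‖ ≤ ‖u‖ + t := by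
    simpa [norm_exp_I_mul_ofReal, abs_of_nonneg ht] using norm_add_le u (t * exp (I * θ))
  have h_pow : (1 + ‖u + t * exp (I * θ)‖) ^ m ≤ (1 + ‖u‖) ^ m * (1 + t) ^ m := by
    rw [← mul_pow]
    gcongr
    nlinarith [norm_nonneg u]
  have h_exp :
      ‖exp (-(u + t * exp (I * θ)) / z)‖ ≤ Real.exp (-(u / z).re) * Real.exp (-(δ * t)) := by
    rw [norm_exp, ← Real.exp_add, Real.exp_le_exp, neg_div, neg_re, add_div, mul_div_assoc,
      add_re, re_ofReal_mul]
    nlinarith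
  calc _ ≤ c * ((1 + ‖u‖) ^ m * (1 + t) ^ m) * (Real.exp (-(u / z).re) * Real.exp (-(δ * t))) := by
        rw [norm_mul]
        gcongr
        exact hf.trans (by gcongr)
    _ = _ := by ring

namespace Polynomial

theorem tendsto_eval_mul_exp_neg_mul_atTop (p : ℝ[X]) {δ : ℝ} (hδ : 0 < δ) :
    Tendsto (fun t => p.eval t * Real.exp (-(δ * t))) atTop (𝓝 0) := by
  refine ((p.comp (C δ⁻¹ * X)).tendsto_div_exp_atTop.comp
    (tendsto_id.const_mul_atTop hδ)).congr fun t => ?_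
  simp [Real.exp_neg, div_eq_mul_inv, inv_mul_cancel_left₀ hδ.ne']

theorem integrableOn_Ioi_eval_mul_exp_neg_mul (p : ℝ[X]) {δ : ℝ} (hδ : 0 < δ) (a : ℝ) :
    IntegrableOn (fun t => p.eval t * Real.exp (-(δ * t))) (Ioi a) := by
  refine integrable_of_isBigO_exp_neg (half_pos hδ) (by fun_prop) ?_
  have := ((p.tendsto_eval_mul_exp_neg_mul_atTop (half_pos hδ)).isBigO_one ℝ).mul
    (Asymptotics.isBigO_refl (fun t => Real.exp (-(δ / 2) * t)) atTop)
  refine this.congr (fun t => ?_) (fun t => one_mul _)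
  rw [mul_assoc, ← Real.exp_add]
  ring_nf

end Polynomial

theorem stmt_3_general (u : ℂ) (φ φ' : ℝ) (hφ : φ < φ') (hφπ : φ' - φ < Real.pi)
    (f : ℂ → ℂ)
    (hf : ∃ U : Set ℂ, IsOpen U ∧
      {lam : ℂ | ∃ r θ : ℝ, 0 ≤ r ∧ φ ≤ θ ∧ θ ≤ φ' ∧
        lam = u + (r : ℂ) * Complex.exp (Complex.I * (θ : ℂ))} ⊆ U ∧
      DifferentiableOn ℂ f U)
    (c : ℝ) (hc : 0 < c) (m : ℕ)
    (hbound : ∀ lam ∈ {lam : ℂ | ∃ r θ : ℝ, 0 ≤ r ∧ φ ≤ θ ∧ θ ≤ φ' ∧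
        lam = u + (r : ℂ) * Complex.exp (Complex.I * (θ : ℂ))},
      ‖f lam‖ ≤ c * (1 + ‖lam‖) ^ m)
    (z : ℂ)
    (h1 : 0 < (Complex.exp (Complex.I * (φ : ℂ)) / z).re)
    (h2 : 0 < (Complex.exp (Complex.I * (φ' : ℂ)) / z).re) :
    IntegrableOn
      (fun t : ℝ => f (u + (t : ℂ) * Complex.exp (Complex.I * (φ : ℂ)))
        * Complex.exp (-(u + (t : ℂ) * Complex.exp (Complex.I * (φ : ℂ))) / z)
        * Complex.exp (Complex.I * (φ : ℂ))) (Set.Ioi 0) ∧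
    IntegrableOn
      (fun t : ℝ => f (u + (t : ℂ) * Complex.exp (Complex.I * (φ' : ℂ)))
        * Complex.exp (-(u + (t : ℂ) * Complex.exp (Complex.I * (φ' : ℂ))) / z)
        * Complex.exp (Complex.I * (φ' : ℂ))) (Set.Ioi 0) ∧
    ∫ t in Set.Ioi (0 : ℝ), f (u + (t : ℂ) * Complex.exp (Complex.I * (φ : ℂ)))
        * Complex.exp (-(u + (t : ℂ) * Complex.exp (Complex.I * (φ : ℂ))) / z)
        * Complex.exp (Complex.I * (φ : ℂ))
      = ∫ t in Set.Ioi (0 : ℝ), f (u + (t : ℂ) * Complex.exp (Complex.I * (φ' : ℂ)))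
        * Complex.exp (-(u + (t : ℂ) * Complex.exp (Complex.I * (φ' : ℂ))) / z)
        * Complex.exp (Complex.I * (φ' : ℂ)) := by
  obtain ⟨U, -, hSU, hfU⟩ := hf
  set g : ℂ → ℂ := fun lam => f lam * exp (-lam / z)
  have hg : DifferentiableOn ℂ g (sector u φ φ') := (hfU.mono hSU).mul (by fun_prop)
  obtain ⟨δ, hδ, hδθ⟩ := exists_pos_forall_le_re_exp_I_mul_mul (w := z⁻¹) hφ.le hφπ h1 h2
  set p : Polynomial ℝ := .C (c * (1 + ‖u‖) ^ m * Real.exp (-(u / z).re)) * (1 + .X) ^ m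
  have hgB : ∀ θ ∈ Icc φ φ', ∀ t : ℝ, 0 < t →
      ‖g (u + t * exp (I * θ))‖ ≤ p.eval t * Real.exp (-(δ * t)) := fun θ hθ t ht => by
    refine (norm_mul_exp_neg_div_le hc.le ht.le (hbound _ ⟨t, θ, ht.le, hθ.1, hθ.2, rfl⟩)
      (hδθ θ hθ)).trans_eq ?_
    simp [p, mul_assoc]
  have hB := p.integrableOn_Ioi_eval_mul_exp_neg_mul hδ 0
  refine ⟨integrableOn_Ioi_ray hg.continuousOn ⟨le_rfl, hφ.le⟩ (hgB φ ⟨le_rfl, hφ.le⟩) hB,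
    integrableOn_Ioi_ray hg.continuousOn ⟨hφ.le, le_rfl⟩ (hgB φ' ⟨hφ.le, le_rfl⟩) hB,
    integral_ray_eq_of_differentiableOn_sector hφ.le hg hgB hB ?_ ?_⟩
  · exact ((by fun_prop : Continuous fun t => t * (p.eval t * Real.exp (-(δ * t)))).tendsto'
      0 0 (by simp)).mono_left nhdsWithin_le_nhds
  · refine ((Polynomial.X * p).tendsto_eval_mul_exp_neg_mul_atTop hδ).congr fun t => ?_
    rw [Polynomial.eval_mul, Polynomial.eval_X, mul_assoc]

/-- (Lemma 3.4 of the paper, honest form.) Let `f` be holomorphic on an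
open set containing the closed sector `S = {u + r e^{iθ} : r ≥ 0, φ ≤ θ ≤ φ′}` (with
`φ < φ′`, `φ′ − φ < π`) and polynomially bounded on `S`.  Then for every `z ≠ 0` with
`Re(e^{iφ}/z) > 0` and `Re(e^{iφ′}/z) > 0`, the Laplace transforms of `f` along the
half-lines `L(u,φ)` and `L(u,φ′)` converge absolutely and are equal. -/
theorem stmt_3 (u : ℂ) (φ φ' : ℝ) (hφ : φ < φ') (hφπ : φ' - φ < Real.pi)
    (f : ℂ → ℂ)
    (hf : ∃ U : Set ℂ, IsOpen U ∧
      {lam : ℂ | ∃ r θ : ℝ, 0 ≤ r ∧ φ ≤ θ ∧ θ ≤ φ' ∧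
        lam = u + (r : ℂ) * Complex.exp (Complex.I * (θ : ℂ))} ⊆ U ∧
      DifferentiableOn ℂ f U)
    (c : ℝ) (hc : 0 < c) (m : ℕ)
    (hbound : ∀ lam ∈ {lam : ℂ | ∃ r θ : ℝ, 0 ≤ r ∧ φ ≤ θ ∧ θ ≤ φ' ∧
        lam = u + (r : ℂ) * Complex.exp (Complex.I * (θ : ℂ))},
      ‖f lam‖ ≤ c * (1 + ‖lam‖) ^ m)
    (z : ℂ) (hz : z ≠ 0)
    (h1 : 0 < (Complex.exp (Complex.I * (φ : ℂ)) / z).re)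
    (h2 : 0 < (Complex.exp (Complex.I * (φ' : ℂ)) / z).re) :
    IntegrableOn
      (fun t : ℝ => f (u + (t : ℂ) * Complex.exp (Complex.I * (φ : ℂ)))
        * Complex.exp (-(u + (t : ℂ) * Complex.exp (Complex.I * (φ : ℂ))) / z)
        * Complex.exp (Complex.I * (φ : ℂ))) (Set.Ioi 0) ∧
    IntegrableOn
      (fun t : ℝ => f (u + (t : ℂ) * Complex.exp (Complex.I * (φ' : ℂ)))
        * Complex.exp (-(u + (t : ℂ) * Complex.exp (Complex.I * (φ' : ℂ))) / z)
        * Complex.exp (Complex.I * (φ' : ℂ))) (Set.Ioi 0) ∧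
    ∫ t in Set.Ioi (0 : ℝ), f (u + (t : ℂ) * Complex.exp (Complex.I * (φ : ℂ)))
        * Complex.exp (-(u + (t : ℂ) * Complex.exp (Complex.I * (φ : ℂ))) / z)
        * Complex.exp (Complex.I * (φ : ℂ))
      = ∫ t in Set.Ioi (0 : ℝ), f (u + (t : ℂ) * Complex.exp (Complex.I * (φ' : ℂ)))
        * Complex.exp (-(u + (t : ℂ) * Complex.exp (Complex.I * (φ' : ℂ))) / z)
        * Complex.exp (Complex.I * (φ' : ℂ)) :=
  stmt_3_general u φ φ' hφ hφπ f hf c hc m hbound z h1 h2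
end

section
/- For an integer N ≥ 2, let A_N denote the commutative ℂ-algebra ℂ[X, Y]/(X^{2N+1} − 4X, X·Y, Y² − X^{2N} + 4). Then A_N is isomorphic as a ℂ-algebra to the product algebra ℂ^{2N+2} (i.e. the algebra of functions Fin(2N+2) → ℂ with pointwise operations). -/
/-- The ideal `(X^{2N+1} − 4X, XY, Y² − X^{2N} + 4)` presenting the quantum cohomology
ring of the even quadric `Q_{2N}` specialized at the origin. -/
noncomputable def quadricIdeal (N : ℕ) : Ideal (MvPolynomial (Fin 2) ℂ) :=
  Ideal.span
    { (MvPolynomial.X 0) ^ (2*N+1) - 4 * MvPolynomial.X 0,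
      MvPolynomial.X 0 * MvPolynomial.X 1,
      (MvPolynomial.X 1) ^ 2 - (MvPolynomial.X 0) ^ (2*N) + 4 }

/-!
The zero locus of the ideal consists of the `2N + 2` distinct points `(s, 0)` with `s^{2N} = 4`
and `(0, t)` with `t² = -4`. Distinct points are separated by polynomials, so evaluation at them
is a surjective algebra map `A_N → ℂ^{2N+2}`. On the other hand the relations reduce every
monomial in the classes `x`, `y` of `X`, `Y` to a combination of `1, x, …, x^{2N}, y`, so
`dim A_N ≤ 2N + 2`, and a surjection onto a space of at least that dimension is bijective.
-/

open Finset Polynomial in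
theorem Complex.card_nthRootsFinset {n : ℕ} (hn : n ≠ 0) {a : ℂ} (ha : a ≠ 0) :
    #(nthRootsFinset n a) = n := by
  classical
  have hζ := Complex.isPrimitiveRoot_exp n hn
  rw [nthRootsFinset_def, Multiset.toFinset_card_of_nodup (hζ.nthRoots_nodup ha),
    hζ.card_nthRoots, if_pos (IsAlgClosed.exists_pow_nat_eq a (Nat.pos_of_ne_zero hn))]

namespace MvPolynomial

open Finset

variable {σ ι K : Type*} [Field K] [Fintype ι]

theorem exists_eval_eq_pi_single [DecidableEq ι] {x : ι → σ → K} (hx : Function.Injective x) (k : ι) :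
    ∃ p : MvPolynomial σ K, ∀ j, eval (x j) p = (Pi.single k 1 : ι → K) j := by
  have hsep : ∀ j, j ≠ k → ∃ q : MvPolynomial σ K, eval (x j) q = 0 ∧ eval (x k) q = 1 := by
    intro j hjk
    obtain ⟨i, hi⟩ := Function.ne_iff.mp (hx.ne hjk)
    refine ⟨C (x k i - x j i)⁻¹ * (X i - C (x j i)), by simp, ?_⟩
    simp [inv_mul_cancel₀ (sub_ne_zero.mpr hi.symm)]
  choose! q hq₀ hq₁ using hsep
  refine ⟨∏ j ∈ univ.erase k, q j, fun j => ?_⟩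
  rw [map_prod]
  by_cases hjk : j = k
  · subst hjk
    rw [Pi.single_eq_same]
    exact prod_eq_one fun i hi => hq₁ i (ne_of_mem_erase hi)
  · rw [Pi.single_eq_of_ne hjk]
    exact prod_eq_zero (mem_erase.mpr ⟨hjk, mem_univ j⟩) (hq₀ j hjk)

theorem pi_aeval_surjective {x : ι → σ → K} (hx : Function.Injective x) :
    Function.Surjective (AlgHom.pi fun i => aeval (x i) : MvPolynomial σ K →ₐ[K] ι → K) := by
  classical
  intro v
  choose p hp using exists_eval_eq_pi_single hx
  refine ⟨∑ k, v k • p k, ?_⟩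
  ext j
  simp [hp, Pi.single_apply]

theorem adjoin_range_mkₐ_X {R : Type*} [CommRing R] (I : Ideal (MvPolynomial σ R)) :
    Algebra.adjoin R (Set.range fun i => Ideal.Quotient.mkₐ R I (X i)) = ⊤ := by
  rw [Set.range_comp', Algebra.adjoin_image, adjoin_range_X, Algebra.map_top,
    AlgHom.range_eq_top]
  exact Ideal.Quotient.mkₐ_surjective R I

end MvPolynomial

theorem Submodule.span_eq_top_of_one_mem_of_mul_mem {R A ι κ : Type*} [CommSemiring R]
    [Semiring A] [Algebra R A] {g : κ → A} (hg : Algebra.adjoin R (Set.range g) = ⊤) {v : ι → A}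
    (h1 : 1 ∈ span R (Set.range v)) (hmul : ∀ i j, v i * g j ∈ span R (Set.range v)) :
    span R (Set.range v) = ⊤ := by
  set M := span R (Set.range v)
  have hmul_gen : ∀ j, ∀ m ∈ M, m * g j ∈ M := by
    intro j m hm
    induction hm using Submodule.span_induction with
    | mem m hm => obtain ⟨i, rfl⟩ := hm; exact hmul i j
    | zero => simp
    | add m m' _ _ h h' => rw [add_mul]; exact add_mem h h'
    | smul r m _ h => rw [smul_mul_assoc]; exact M.smul_mem r h
  have hmul_all : ∀ a, ∀ m ∈ M, m * a ∈ M := by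
    intro a
    have ha : a ∈ Algebra.adjoin R (Set.range g) := hg ▸ Algebra.mem_top
    induction ha using Algebra.adjoin_induction with
    | mem a ha => obtain ⟨j, rfl⟩ := ha; exact hmul_gen j
    | algebraMap r =>
      intro m hm
      rw [← Algebra.commutes, ← Algebra.smul_def]
      exact M.smul_mem r hm
    | add a b _ _ ha hb => intro m hm; rw [mul_add]; exact add_mem (ha m hm) (hb m hm)
    | mul a b _ _ ha hb => intro m hm; rw [← mul_assoc]; exact hb _ (ha m hm)
  exact eq_top_iff.mpr fun a _ => one_mul a ▸ hmul_all a 1 h1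

theorem LinearMap.bijective_of_surjective_of_span_eq_top {K V W ι : Type*} [Field K]
    [AddCommGroup V] [Module K V] [AddCommGroup W] [Module K W] [FiniteDimensional K W]
    [Fintype ι] {v : ι → V} (hv : Submodule.span K (Set.range v) = ⊤)
    (hcard : Fintype.card ι ≤ Module.finrank K W) {f : V →ₗ[K] W} (hf : Function.Surjective f) :
    Function.Bijective f := by
  classical
  have : FiniteDimensional K V := ⟨⟨Finset.univ.image v, by simpa using hv⟩⟩
  have hrank : Module.finrank K V = Module.finrank K W :=
    le_antisymm ((finrank_le_of_span_eq_top hv).trans hcard)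
      (LinearMap.finrank_le_finrank_of_surjective hf)
  exact ⟨(injective_iff_surjective_of_finrank_eq_finrank hrank).mpr hf, hf⟩

namespace Quadric

open MvPolynomial
open Polynomial (nthRootsFinset mem_nthRootsFinset ne_zero_of_mem_nthRootsFinset)

variable {N : ℕ}

variable (N) in
abbrev PointIndex : Type := nthRootsFinset (2 * N) (4 : ℂ) ⊕ nthRootsFinset 2 (-4 : ℂ)

variable (N) in
def point : PointIndex N → Fin 2 → ℂ
  | .inl s => ![s, 0]
  | .inr t => ![0, t]

theorem card_pointIndex (hN : N ≠ 0) : Fintype.card (PointIndex N) = 2 * N + 2 := by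
  simp [Complex.card_nthRootsFinset, hN]

variable (N) in
theorem point_injective : Function.Injective (point N) := by
  have h4 : (4 : ℂ) ≠ 0 := by norm_num
  rintro (⟨s, hs⟩ | ⟨t, ht⟩) (⟨s', hs'⟩ | ⟨t', ht'⟩) h <;>
    have h0 := congr_fun h 0 <;> have h1 := congr_fun h 1 <;>
    simp only [point, Matrix.cons_val_zero, Matrix.cons_val_one, Matrix.cons_val_fin_one] at h0 h1
  · exact congrArg Sum.inl (Subtype.ext h0)
  · exact absurd h0 (ne_zero_of_mem_nthRootsFinset h4 hs)
  · exact absurd h0.symm (ne_zero_of_mem_nthRootsFinset h4 hs')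
  · exact congrArg Sum.inr (Subtype.ext h1)

theorem point_mem_zeroLocus (hN : N ≠ 0) (i : PointIndex N) :
    point N i 0 ^ (2 * N + 1) = 4 * point N i 0 ∧ point N i 0 * point N i 1 = 0 ∧
      point N i 1 ^ 2 = point N i 0 ^ (2 * N) - 4 := by
  rcases i with ⟨s, hs⟩ | ⟨t, ht⟩
  · rw [mem_nthRootsFinset (by omega)] at hs
    simp [point, pow_succ, hs]
  · rw [mem_nthRootsFinset two_pos] at ht
    simp [point, ht, hN]

theorem quadricIdeal_le_ker (hN : N ≠ 0) :
    quadricIdeal N ≤ RingHom.ker (AlgHom.pi fun i => aeval (point N i)) := by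
  rw [quadricIdeal, Ideal.span_le]
  simp only [Set.insert_subset_iff, Set.singleton_subset_iff, SetLike.mem_coe, RingHom.mem_ker]
  refine ⟨?_, ?_, ?_⟩ <;> ext i <;> obtain ⟨h₁, h₂, h₃⟩ := point_mem_zeroLocus hN i <;>
    simp only [AlgHom.pi_apply, Pi.zero_apply, map_add, map_sub, map_mul, map_pow, map_ofNat,
      aeval_X]
  · linear_combination h₁
  · exact h₂
  · linear_combination h₃

variable (N) in
noncomputable def x : MvPolynomial (Fin 2) ℂ ⧸ quadricIdeal N := Ideal.Quotient.mkₐ ℂ _ (X 0)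

variable (N) in
noncomputable def y : MvPolynomial (Fin 2) ℂ ⧸ quadricIdeal N := Ideal.Quotient.mkₐ ℂ _ (X 1)

theorem mkₐ_generator_eq_zero {p : MvPolynomial (Fin 2) ℂ}
    (hp : p ∈ ({X 0 ^ (2*N+1) - 4 * X 0, X 0 * X 1, X 1 ^ 2 - X 0 ^ (2*N) + 4} : Set _)) :
    Ideal.Quotient.mkₐ ℂ (quadricIdeal N) p = 0 :=
  Ideal.Quotient.eq_zero_iff_mem.mpr (Ideal.subset_span hp)

variable (N) in
theorem x_pow_two_mul_add_one : x N ^ (2 * N + 1) = 4 * x N := by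
  have := mkₐ_generator_eq_zero (N := N) (Set.mem_insert _ _)
  rw [map_sub, map_mul, map_pow, map_ofNat] at this
  exact sub_eq_zero.mp this

variable (N) in
theorem x_mul_y : x N * y N = 0 := by
  have := mkₐ_generator_eq_zero (N := N) (Set.mem_insert_of_mem _ (Set.mem_insert _ _))
  rwa [map_mul] at this

variable (N) in
theorem y_sq : y N ^ 2 = x N ^ (2 * N) - 4 := by
  have := mkₐ_generator_eq_zero (N := N) (Set.mem_insert_of_mem _ (Set.mem_insert_of_mem _ rfl))
  rw [map_add, map_sub, map_pow, map_pow, map_ofNat] at this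
  change y N ^ 2 - x N ^ (2 * N) + 4 = 0 at this
  linear_combination this

variable (N) in
noncomputable def spanningFamily :
    Option (Fin (2 * N + 1)) → MvPolynomial (Fin 2) ℂ ⧸ quadricIdeal N
  | none => y N
  | some i => x N ^ (i : ℕ)

theorem span_spanningFamily (hN : N ≠ 0) :
    Submodule.span ℂ (Set.range (spanningFamily N)) = ⊤ := by
  set M := Submodule.span ℂ (Set.range (spanningFamily N))
  have hx : ∀ i ≤ 2 * N, x N ^ i ∈ M := fun i hi =>
    Submodule.subset_span ⟨some ⟨i, by omega⟩, rfl⟩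
  have hy : y N ∈ M := Submodule.subset_span ⟨none, rfl⟩
  have h1 : 1 ∈ M := pow_zero (x N) ▸ hx 0 (Nat.zero_le _)
  have h4 : ∀ m ∈ M, 4 * m ∈ M := fun m hm => by
    rw [← map_ofNat (algebraMap ℂ _) 4, ← Algebra.smul_def]
    exact M.smul_mem 4 hm
  refine Submodule.span_eq_top_of_one_mem_of_mul_mem (adjoin_range_mkₐ_X _) h1 ?_
  rintro (_ | ⟨i, hi⟩) j <;> fin_cases j
  · change y N * x N ∈ M
    rw [mul_comm, x_mul_y]
    exact zero_mem M
  · change y N * y N ∈ M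
    rw [← sq, y_sq]
    exact sub_mem (hx _ le_rfl) (by simpa using h4 1 h1)
  · change x N ^ i * x N ∈ M
    rw [← pow_succ]
    obtain hi | rfl := Nat.lt_succ_iff_lt_or_eq.mp hi
    · exact hx _ hi
    · rw [x_pow_two_mul_add_one]
      exact h4 _ (pow_one (x N) ▸ hx 1 (by omega))
  · change x N ^ i * y N ∈ M
    cases i with
    | zero => rwa [pow_zero, one_mul]
    | succ k => rw [pow_succ, mul_assoc, x_mul_y, mul_zero]; exact zero_mem M

end Quadric

/-- For `N ≥ 2`, the algebra
`A_N = ℂ[X,Y]/(X^{2N+1} − 4X, XY, Y² − X^{2N} + 4)` is isomorphic as a `ℂ`-algebra to the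
product algebra `ℂ^{2N+2}` (semisimplicity of the specialized quantum cohomology of
`Q_{2N}`, Corollary 6.2 of the paper). -/
theorem stmt_6 (N : ℕ) (hN : 2 ≤ N) :
    Nonempty ((MvPolynomial (Fin 2) ℂ ⧸ quadricIdeal N) ≃ₐ[ℂ] (Fin (2*N+2) → ℂ)) := by
  have hN0 : N ≠ 0 := by omega
  let f := Ideal.Quotient.liftₐ (quadricIdeal N) _ fun _ ha => Quadric.quadricIdeal_le_ker hN0 ha
  have hsurj : Function.Surjective f := Ideal.Quotient.lift_surjective_of_surjective _ _
    (MvPolynomial.pi_aeval_surjective (Quadric.point_injective N))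
  have hcard := Quadric.card_pointIndex hN0
  have hbij : Function.Bijective f :=
    LinearMap.bijective_of_surjective_of_span_eq_top (f := f.toLinearMap)
      (Quadric.span_spanningFamily hN0) (by simp [hcard]) hsurj
  exact ⟨(AlgEquiv.ofBijective f hbij).trans
    (AlgEquiv.piCongrLeft ℂ (fun _ => ℂ) (Fintype.equivFinOfCardEq hcard))⟩
end

section
/- For an integer N ≥ 2, let A_N denote the commutative ℂ-algebra ℂ[X, Y]/(X^{2N+1} − 4X, X·Y, Y² − X^{2N} + 4), and in A_N set v± := (i/4)·(4 − X^{2N}) ± (1/2)·Y. Then X·v₊ = 0, X·v₋ = 0, v₊·v₋ = 0, v₊² = 2i·v₊, and v₋² = 2i·v₋. -/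
theorem quadric_key {R : Type*} [CommRing R] (a b p t vp vm : R)
    (ha : p * a = 4 * a) (hab : a * b = 0) (hpb : p * b = 0)
    (hp2 : p * p = 4 * p) (hbb : b * b = p - 4)
    (F4 : t * t = -1) (h4 : IsUnit (4 : R)) (h16 : IsUnit (16 : R))
    (hvp4 : 4 * vp = t * (4 - p) + 2 * b)
    (hvm4 : 4 * vm = t * (4 - p) - 2 * b) :
    a * vp = 0 ∧ a * vm = 0 ∧ vp * vm = 0 ∧
      vp ^ 2 = (2 * t) * vp ∧ vm ^ 2 = (2 * t) * vm := by
  refine ⟨?_, ?_, ?_, ?_, ?_⟩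
  · refine h4.mul_left_cancel ?_
    show (4 : R) * (a * vp) = 4 * 0
    linear_combination a * hvp4 - t * ha + 2 * hab
  · refine h4.mul_left_cancel ?_
    show (4 : R) * (a * vm) = 4 * 0
    linear_combination a * hvm4 - t * ha - 2 * hab
  · refine h16.mul_left_cancel ?_
    show (16 : R) * (vp * vm) = 16 * 0
    linear_combination 4 * vm * hvp4 + (t * (4 - p) + 2 * b) * hvm4
      + (4 - p) ^ 2 * F4 - 4 * hbb - hp2
  · refine h16.mul_left_cancel ?_
    show (16 : R) * vp ^ 2 = 16 * ((2 * t) * vp)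
    linear_combination (4 * vp + t * (4 - p) + 2 * b - 8 * t) * hvp4
      + ((4 - p) ^ 2 - 8 * (4 - p)) * F4 - 4 * t * hpb + 4 * hbb - hp2
  · refine h16.mul_left_cancel ?_
    show (16 : R) * vm ^ 2 = 16 * ((2 * t) * vm)
    linear_combination (4 * vm + t * (4 - p) - 2 * b - 8 * t) * hvm4
      + ((4 - p) ^ 2 - 8 * (4 - p)) * F4 + 4 * t * hpb + 4 * hbb - hp2


set_option maxHeartbeats 1000000 in
/-- In `A_N = ℂ[X,Y]/(X^{2N+1} − 4X, XY, Y² − X^{2N} + 4)` with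
`v± := (i/4)(4 − X^{2N}) ± (1/2)Y`, one has `X v₊ = 0`, `X v₋ = 0`, `v₊ v₋ = 0`,
`v₊² = 2i v₊` and `v₋² = 2i v₋` (Corollary 6.2 of the paper). -/
theorem stmt_7 (N : ℕ) (hN : 2 ≤ N)
    (vp vm : MvPolynomial (Fin 2) ℂ ⧸ quadricIdeal N)
    (hvp : vp = Ideal.Quotient.mk (quadricIdeal N)
      (MvPolynomial.C (Complex.I/4) * (4 - (MvPolynomial.X 0) ^ (2*N))
        + MvPolynomial.C (1/2 : ℂ) * MvPolynomial.X 1))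
    (hvm : vm = Ideal.Quotient.mk (quadricIdeal N)
      (MvPolynomial.C (Complex.I/4) * (4 - (MvPolynomial.X 0) ^ (2*N))
        - MvPolynomial.C (1/2 : ℂ) * MvPolynomial.X 1)) :
    Ideal.Quotient.mk (quadricIdeal N) (MvPolynomial.X 0) * vp = 0 ∧
    Ideal.Quotient.mk (quadricIdeal N) (MvPolynomial.X 0) * vm = 0 ∧
    vp * vm = 0 ∧
    vp ^ 2 = Ideal.Quotient.mk (quadricIdeal N) (MvPolynomial.C (2 * Complex.I)) * vp ∧
    vm ^ 2 = Ideal.Quotient.mk (quadricIdeal N) (MvPolynomial.C (2 * Complex.I)) * vm := by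

  obtain ⟨M, hM⟩ : ∃ M, 2*N = M + 1 := ⟨2*N - 1, by omega⟩
  set q := Ideal.Quotient.mk (quadricIdeal N) with hq
  -- generator images vanish
  have g1 : q ((MvPolynomial.X 0 : MvPolynomial (Fin 2) ℂ) ^ (2*N+1)
      - 4 * MvPolynomial.X 0) = 0 :=
    Ideal.Quotient.eq_zero_iff_mem.mpr (Ideal.subset_span (Set.mem_insert _ _))
  have g2 : q ((MvPolynomial.X 0 : MvPolynomial (Fin 2) ℂ) * MvPolynomial.X 1) = 0 :=
    Ideal.Quotient.eq_zero_iff_mem.mpr (Ideal.subset_span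
      (Set.mem_insert_of_mem _ (Set.mem_insert _ _)))
  have g3 : q ((MvPolynomial.X 1 : MvPolynomial (Fin 2) ℂ) ^ 2
      - (MvPolynomial.X 0) ^ (2*N) + 4) = 0 :=
    Ideal.Quotient.eq_zero_iff_mem.mpr (Ideal.subset_span
      (Set.mem_insert_of_mem _ (Set.mem_insert_of_mem _ rfl)))
  simp only [map_sub, map_add, map_mul, map_pow, map_ofNat] at g1 g2 g3
  -- basic relations in the quotient
  have hab : q (MvPolynomial.X 0) * q (MvPolynomial.X 1) = 0 := g2
  have ha : q (MvPolynomial.X 0) ^ (2*N) * q (MvPolynomial.X 0)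
      = 4 * q (MvPolynomial.X 0) := by
    rw [sub_eq_zero, pow_succ] at g1; exact g1
  have hpb : q (MvPolynomial.X 0) ^ (2*N) * q (MvPolynomial.X 1) = 0 := by
    rw [hM, pow_succ, mul_assoc, hab, mul_zero]
  have hp2 : q (MvPolynomial.X 0) ^ (2*N) * q (MvPolynomial.X 0) ^ (2*N)
      = 4 * q (MvPolynomial.X 0) ^ (2*N) := by
    rw [hM, pow_succ] at ha ⊢
    linear_combination (q (MvPolynomial.X 0) ^ M) * ha
  have hbb : q (MvPolynomial.X 1) * q (MvPolynomial.X 1)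
      = q (MvPolynomial.X 0) ^ (2*N) - 4 := by
    linear_combination g3
  -- constants
  have F4 : q (MvPolynomial.C Complex.I) * q (MvPolynomial.C Complex.I) = -1 := by
    rw [← map_mul, ← map_mul, Complex.I_mul_I]
    simp
  have F1 : 4 * q (MvPolynomial.C (Complex.I/4)) = q (MvPolynomial.C Complex.I) := by
    rw [← map_ofNat q 4, ← map_ofNat (MvPolynomial.C : ℂ →+* MvPolynomial (Fin 2) ℂ) 4,
      ← map_mul, ← map_mul]
    rw [show (4:ℂ) * (Complex.I/4) = Complex.I by ring]
  have F2 : 2 * q (MvPolynomial.C (1/2 : ℂ)) = 1 := by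
    rw [← map_ofNat q 2, ← map_ofNat (MvPolynomial.C : ℂ →+* MvPolynomial (Fin 2) ℂ) 2,
      ← map_mul, ← map_mul, show (2:ℂ) * (1/2) = 1 by norm_num, map_one, map_one]
  have F3 : q (MvPolynomial.C (2 * Complex.I)) = 2 * q (MvPolynomial.C Complex.I) := by
    rw [map_mul, map_mul, map_ofNat, map_ofNat]
  -- units
  have h4 : IsUnit (4 : MvPolynomial (Fin 2) ℂ ⧸ quadricIdeal N) := by
    have := (isUnit_iff_ne_zero.mpr (by norm_num : (4:ℂ) ≠ 0)).map
      (algebraMap ℂ (MvPolynomial (Fin 2) ℂ ⧸ quadricIdeal N))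
    rwa [map_ofNat] at this
  have h16 : IsUnit (16 : MvPolynomial (Fin 2) ℂ ⧸ quadricIdeal N) := by
    have := (isUnit_iff_ne_zero.mpr (by norm_num : (16:ℂ) ≠ 0)).map
      (algebraMap ℂ (MvPolynomial (Fin 2) ℂ ⧸ quadricIdeal N))
    rwa [map_ofNat] at this
  -- scaled expressions for vp, vm
  have hvp4 : 4 * vp = q (MvPolynomial.C Complex.I)
      * (4 - q (MvPolynomial.X 0) ^ (2*N)) + 2 * q (MvPolynomial.X 1) := by
    rw [hvp]
    simp only [map_add, map_mul, map_sub, map_pow, map_ofNat]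
    linear_combination (4 - q (MvPolynomial.X 0) ^ (2*N)) * F1
      + 2 * q (MvPolynomial.X 1) * F2
  have hvm4 : 4 * vm = q (MvPolynomial.C Complex.I)
      * (4 - q (MvPolynomial.X 0) ^ (2*N)) - 2 * q (MvPolynomial.X 1) := by
    rw [hvm]
    simp only [map_add, map_mul, map_sub, map_pow, map_ofNat]
    linear_combination (4 - q (MvPolynomial.X 0) ^ (2*N)) * F1
      - 2 * q (MvPolynomial.X 1) * F2
  rw [F3]
  exact quadric_key (q (MvPolynomial.X 0)) (q (MvPolynomial.X 1))
    (q (MvPolynomial.X 0) ^ (2*N)) (q (MvPolynomial.C Complex.I)) vp vm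
    ha hab hpb hp2 hbb F4 h4 h16 hvp4 hvm4
end

section
/- In the ring ℚ[[x]] of formal power series over ℚ, the series g = 2·(1 + e^x)^{−1} is the unique formal power series such that for every integer k ≥ 1, the coefficient of x^{k−1} in ((1 + e^{−x})/2) · g · (x/(1 − e^{−x}))^k equals 1 if k = 1 and equals 0 if k ≥ 2. -/
/-!
Put `f = X·u = 1 - e^{-x}`, so that `f' = e^{-x}`, and note `(1 + e^{-x})/(1 + e^x) = e^{-x}`.
For `g = 2/(1 + eˣ)` the `k`-th condition then reads `[x^m] f'·u^{-(m+1)} = δ_{m,0}` with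
`m = k - 1`, i.e. `Res f'/f^{m+1} = δ_{m,0}`; for `m ≥ 1` this holds because
`m·f'/f^{m+1} = -(f^{-m})'` is a derivative. Uniqueness: when `v(0)` is a unit, the coefficient
of `x^n` in `F·v^{n+1}` is `F_n·v(0)^{n+1}` plus terms involving only `F_0, …, F_{n-1}`, so these
coefficients determine `F = ((1 + e^{-x})/2)·g`, and hence `g`.
-/

open PowerSeries

namespace PowerSeries

theorem derivative_rescale {R : Type*} [CommRing R] (a : R) (f : R⟦X⟧) :
    d⁄dX R (rescale a f) = C a * rescale a (d⁄dX R f) := by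
  ext n
  simp only [coeff_derivative, coeff_rescale, coeff_C_mul, pow_succ]
  ring

@[simp]
theorem constantCoeff_rescale {R : Type*} [CommSemiring R] (a : R) (f : R⟦X⟧) :
    constantCoeff (rescale a f) = constantCoeff f := by
  rw [← coeff_zero_eq_constantCoeff_apply, coeff_rescale, pow_zero, one_mul,
    coeff_zero_eq_constantCoeff_apply]

theorem eq_zero_of_forall_coeff_mul_pow_succ_eq_zero {R : Type*} [CommRing R] {F v : R⟦X⟧}
    (hv : IsUnit (constantCoeff v)) (h : ∀ n, coeff n (F * v ^ (n + 1)) = 0) : F = 0 := by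
  ext n
  induction n using Nat.strong_induction_on with
  | _ n ih =>
    have hn := h n
    rw [coeff_mul, Finset.sum_eq_single_of_mem (n, 0) (by simp)] at hn
    · rw [coeff_zero_eq_constantCoeff, map_pow] at hn
      simpa using (hv.pow (n + 1)).mul_left_eq_zero.mp hn
    · rintro ⟨a, b⟩ hab hne
      rw [Finset.HasAntidiagonal.mem_antidiagonal] at hab
      rw [ih a (by grind), map_zero, zero_mul]

section Field

variable {K : Type*} [Field K]

theorem X_mul_derivative_inv_pow_add_derivative_X_mul (u : K⟦X⟧) (hu : constantCoeff u ≠ 0)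
    (m : ℕ) :
    X * d⁄dX K (u⁻¹ ^ m) + (m : K⟦X⟧) * (d⁄dX K (X * u) * u⁻¹ ^ (m + 1)) =
      (m : K⟦X⟧) * u⁻¹ ^ m := by
  have huv : u * u⁻¹ = 1 := PowerSeries.mul_inv_cancel u hu
  rcases m with _ | n
  · simp
  · rw [derivative_pow, derivative_inv', Derivation.leibniz, derivative_X, smul_eq_mul,
      smul_eq_mul, Nat.add_sub_cancel]
    linear_combination (↑(n + 1) * u⁻¹ ^ (n + 1)) * huv

theorem coeff_derivative_X_mul_mul_inv_pow [CharZero K] {u : K⟦X⟧} (hu : constantCoeff u ≠ 0)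
    (m : ℕ) : coeff m (d⁄dX K (X * u) * u⁻¹ ^ (m + 1)) = if m = 0 then 1 else 0 := by
  rcases m with _ | n
  · simp [Derivation.leibniz, constantCoeff_inv, hu]
  · have h := congrArg (coeff (n + 1)) (X_mul_derivative_inv_pow_add_derivative_X_mul u hu (n + 1))
    rw [map_add, coeff_succ_X_mul, coeff_derivative, ← map_natCast (C (R := K)), coeff_C_mul,
      coeff_C_mul] at h
    have h' : ((n + 1 : ℕ) : K) * coeff (n + 1) (d⁄dX K (X * u) * u⁻¹ ^ (n + 1 + 1)) = 0 := by
      push_cast at h ⊢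
      linear_combination h
    simpa [Nat.cast_add_one_ne_zero] using h'

theorem half_mul_one_add_exp_neg_mul_two_mul_inv_one_add_exp [Algebra ℚ K] :
    C (1 / 2 : K) * (1 + rescale (-1) (exp K)) * (2 * (1 + exp K)⁻¹) = rescale (-1) (exp K) := by
  have hexp : exp K * rescale (-1) (exp K) = 1 := exp_mul_exp_neg_eq_one
  have := algebraRat.charZero K
  have hinv : (1 + exp K) * (1 + exp K)⁻¹ = 1 :=
    PowerSeries.mul_inv_cancel _ (by simp [constantCoeff_exp])
  have htwo : C (1 / 2 : K) * 2 = 1 := by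
    rw [← map_ofNat C 2, ← map_mul]; norm_num
  linear_combination (C (1 / 2 : K) * 2 * rescale (-1) (exp K)) * hinv
    - C (1 / 2 : K) * 2 * (1 + exp K)⁻¹ * hexp + rescale (-1) (exp K) * htwo

end Field

end PowerSeries

/-- In `ℚ[[x]]`, the series `g = 2(1 + eˣ)⁻¹` is the unique formal power
series such that for every `k ≥ 1` the coefficient of `x^{k−1}` in
`((1 + e^{−x})/2) · g · (x/(1 − e^{−x}))^k` equals `δ_{k,1}`.  Here `u` is the unit with
`x·u = 1 − e^{−x}`, so that `x/(1 − e^{−x}) = u⁻¹` (key computation in Theorem 4.1 of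
the paper). -/
theorem stmt_8 (u : PowerSeries ℚ)
    (hu : PowerSeries.X * u = 1 - PowerSeries.rescale (-1) (PowerSeries.exp ℚ))
    (g : PowerSeries ℚ) :
    g = 2 * (1 + PowerSeries.exp ℚ)⁻¹ ↔
      ∀ k : ℕ, 1 ≤ k →
        PowerSeries.coeff (R := ℚ) (k - 1)
          (PowerSeries.C (R := ℚ) (1/2) * (1 + PowerSeries.rescale (-1) (PowerSeries.exp ℚ))
            * g * (u⁻¹) ^ k)
          = if k = 1 then 1 else 0 := by
  have hXu : d⁄dX ℚ (X * u) = rescale (-1) (exp ℚ) := by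
    simp [hu, derivative_rescale, derivative_exp]
  have hu0 : constantCoeff u ≠ 0 := by
    have h : constantCoeff u = 1 := by
      simpa [Derivation.leibniz, constantCoeff_exp] using congrArg constantCoeff hXu
    exact h ▸ one_ne_zero
  have hcoeff (n : ℕ) : coeff n (C (1 / 2) * (1 + rescale (-1) (exp ℚ)) * (2 * (1 + exp ℚ)⁻¹)
      * u⁻¹ ^ (n + 1)) = if n = 0 then 1 else 0 := by
    rw [half_mul_one_add_exp_neg_mul_two_mul_inv_one_add_exp, ← hXu]
    exact coeff_derivative_X_mul_mul_inv_pow hu0 n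
  constructor
  · rintro rfl k hk
    obtain ⟨n, rfl⟩ := Nat.exists_eq_add_of_le' hk
    simpa using hcoeff n
  · intro h
    have hA : C (1 / 2 : ℚ) * (1 + rescale (-1) (exp ℚ)) ≠ 0 := fun h0 => by
      simpa [constantCoeff_exp] using congrArg constantCoeff h0
    refine mul_left_cancel₀ hA (sub_eq_zero.1 ?_)
    refine eq_zero_of_forall_coeff_mul_pow_succ_eq_zero (v := u⁻¹) (by simpa using hu0) fun n => ?_
    rw [sub_mul, map_sub, hcoeff n, sub_eq_zero]
    simpa using h (n + 1) le_add_self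
end

section
/- Let N ≥ 1 be an integer, C > 0, and let c be a complex-valued function of multi-indices (n₁, …, n_{2N+1}) ∈ ℕ^{2N+1} satisfying |c(n₁, …, n_{2N+1})| ≤ (∑_{i=1}^{2N+1} n_i)! · C^{E(n)}, where E(n) = ∑_{i=1}^{2N+1} n_i + (∑_{i=1}^{2N+1} (i−1)·n_i + 3)/(2N+1) − 1. Then for every (t₁, …, t_{2N+1}) ∈ ℂ^{2N+1} with ∑_{i=1}^{2N+1} C^{1 + (i−1)/(2N+1)} · |t_i| < 1, the family (n₁, …, n_{2N+1}) ↦ c(n₁, …, n_{2N+1}) · ∏_{i=1}^{2N+1} t_i^{n_i}/n_i! is absolutely summable, and ∑_{n ∈ ℕ^{2N+1}} |c(n)| · ∏_{i=1}^{2N+1} |t_i|^{n_i}/n_i! ≤ C^{3/(2N+1) − 1} / (1 − ∑_{i=1}^{2N+1} C^{1 + (i−1)/(2N+1)} |t_i|). -/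
/-- (Proposition 5.2 of the paper.) Given Zinger's factorial-exponential
bound on coefficients `c(n₁,…,n_{2N+1})` (where the index `i` of the statement corresponds
to `i+1` for `i : Fin (2N+1)`), the genus-zero Gromov–Witten potential of an
odd-dimensional quadric converges absolutely: for `∑ᵢ C^{1+(i−1)/(2N+1)}|tᵢ| < 1`, the
family `c(n)·∏ tᵢ^{nᵢ}/nᵢ!` is absolutely summable, with the stated bound on the sum of
absolute values. -/
theorem stmt_11 (N : ℕ) (hN : 1 ≤ N) (C : ℝ) (hC : 0 < C)
    (c : (Fin (2*N+1) → ℕ) → ℂ)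
    (hc : ∀ n : Fin (2*N+1) → ℕ,
      ‖c n‖ ≤ ((∑ i : Fin (2*N+1), n i).factorial : ℝ) *
        C ^ (((∑ i : Fin (2*N+1), n i : ℕ) : ℝ)
          + (((∑ i : Fin (2*N+1), (i : ℕ) * n i : ℕ) : ℝ) + 3) / (2*(N:ℝ)+1) - 1))
    (t : Fin (2*N+1) → ℂ)
    (ht : ∑ i : Fin (2*N+1), C ^ (1 + ((i : ℕ) : ℝ) / (2*(N:ℝ)+1)) * ‖t i‖ < 1) :
    Summable (fun n : Fin (2*N+1) → ℕ =>
      ‖c n‖ * ∏ i : Fin (2*N+1), ‖t i‖ ^ (n i) / ((n i).factorial : ℝ)) ∧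
    ∑' n : Fin (2*N+1) → ℕ,
        ‖c n‖ * ∏ i : Fin (2*N+1), ‖t i‖ ^ (n i) / ((n i).factorial : ℝ)
      ≤ C ^ ((3 : ℝ) / (2*(N:ℝ)+1) - 1)
        / (1 - ∑ i : Fin (2*N+1), C ^ (1 + ((i : ℕ) : ℝ) / (2*(N:ℝ)+1)) * ‖t i‖) := by
  set D : ℝ := 2*(N:ℝ)+1 with hD
  have hDpos : (0:ℝ) < D := by positivity
  set x : Fin (2*N+1) → ℝ := fun i => C ^ (1 + ((i : ℕ) : ℝ) / D) * ‖t i‖ with hxdef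
  have hx0 : ∀ i, 0 ≤ x i := fun i => by positivity
  set S : ℝ := ∑ i : Fin (2*N+1), x i with hS
  have hS0 : 0 ≤ S := Finset.sum_nonneg fun i _ => hx0 i
  have hS1 : S < 1 := ht
  set K : ℝ := C ^ ((3 : ℝ) / D - 1) with hK
  have hKpos : 0 < K := Real.rpow_pos_of_pos hC _
  set f : (Fin (2*N+1) → ℕ) → ℝ := fun n =>
    ‖c n‖ * ∏ i : Fin (2*N+1), ‖t i‖ ^ (n i) / ((n i).factorial : ℝ) with hf
  set g : (Fin (2*N+1) → ℕ) → ℝ := fun n =>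
    K * ((Nat.multinomial Finset.univ n : ℝ) * ∏ i : Fin (2*N+1), x i ^ n i) with hg
  have hf0 : ∀ n, 0 ≤ f n := by
    intro n
    apply mul_nonneg (norm_nonneg _)
    exact Finset.prod_nonneg fun i _ => by positivity
  -- pointwise bound f ≤ g
  have hfg : ∀ n, f n ≤ g n := by
    intro n
    have hexp : (((∑ i : Fin (2*N+1), n i : ℕ) : ℝ)
        + (((∑ i : Fin (2*N+1), (i : ℕ) * n i : ℕ) : ℝ) + 3) / D - 1)
        = ((3 : ℝ) / D - 1) + ∑ i : Fin (2*N+1), (n i : ℝ) * (1 + ((i : ℕ) : ℝ) / D) := by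
      push_cast
      simp only [mul_add, mul_one, Finset.sum_add_distrib, Finset.sum_div]
      have h2 : ∀ i ∈ (Finset.univ : Finset (Fin (2*N+1))),
          (n i : ℝ) * (((i : ℕ) : ℝ) / D) = (((i : ℕ) : ℝ) * (n i : ℝ)) / D :=
        fun i _ => by ring
      rw [Finset.sum_congr rfl h2, ← Finset.sum_div]
      ring
    have hCr : C ^ (((∑ i : Fin (2*N+1), n i : ℕ) : ℝ)
        + (((∑ i : Fin (2*N+1), (i : ℕ) * n i : ℕ) : ℝ) + 3) / D - 1)
        = K * ∏ i : Fin (2*N+1), (C ^ (1 + ((i : ℕ) : ℝ) / D)) ^ n i := by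
      rw [hexp, Real.rpow_add hC, Real.rpow_sum_of_pos hC]
      congr 1
      apply Finset.prod_congr rfl
      intro i _
      rw [mul_comm ((n i : ℝ)), Real.rpow_mul hC.le, Real.rpow_natCast]
    have hmul : ((∑ i : Fin (2*N+1), n i).factorial : ℝ)
        * ∏ i : Fin (2*N+1), ((n i).factorial : ℝ)⁻¹
        = (Nat.multinomial Finset.univ n : ℝ) := by
      have hspec := Nat.multinomial_spec (Finset.univ : Finset (Fin (2*N+1))) n
      have : ((∏ i : Fin (2*N+1), (n i).factorial : ℕ) : ℝ)
          * (Nat.multinomial Finset.univ n : ℝ)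
          = ((∑ i : Fin (2*N+1), n i).factorial : ℝ) := by exact_mod_cast congrArg Nat.cast hspec
      push_cast at this ⊢
      rw [← this, mul_comm, ← mul_assoc, ← Finset.prod_mul_distrib]
      rw [Finset.prod_congr rfl (fun i _ => inv_mul_cancel₀ (by positivity : ((n i).factorial : ℝ) ≠ 0)), Finset.prod_const_one, one_mul]
    calc f n ≤ (((∑ i : Fin (2*N+1), n i).factorial : ℝ) *
          C ^ (((∑ i : Fin (2*N+1), n i : ℕ) : ℝ)
            + (((∑ i : Fin (2*N+1), (i : ℕ) * n i : ℕ) : ℝ) + 3) / D - 1))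
          * ∏ i : Fin (2*N+1), ‖t i‖ ^ (n i) / ((n i).factorial : ℝ) := by
          apply mul_le_mul_of_nonneg_right (hc n)
          exact Finset.prod_nonneg fun i _ => by positivity
      _ = g n := by
          rw [hCr]
          simp only [hg, hxdef]
          rw [← hmul]
          simp only [div_eq_mul_inv, mul_pow, Finset.prod_mul_distrib]
          ring
  -- sum of g over each degree slice
  have hslice : ∀ m : ℕ, ∑ n ∈ Finset.piAntidiag (Finset.univ : Finset (Fin (2*N+1))) m,
      g n = K * S ^ m := by
    intro m
    rw [← Finset.mul_sum]
    congr 1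
    rw [hS, Finset.sum_pow_eq_sum_piAntidiag]
  -- bound on finite partial sums of g
  have hgbound : ∀ u : Finset (Fin (2*N+1) → ℕ), ∑ n ∈ u, g n ≤ K / (1 - S) := by
    intro u
    set M : ℕ := u.sup (fun n => ∑ i : Fin (2*N+1), n i) with hM
    have hsub : u ⊆ (Finset.range (M+1)).biUnion
        (fun m => Finset.piAntidiag (Finset.univ : Finset (Fin (2*N+1))) m) := by
      intro n hn
      rw [Finset.mem_biUnion]
      refine ⟨∑ i : Fin (2*N+1), n i, ?_, ?_⟩
      · rw [Finset.mem_range]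
        exact Nat.lt_succ_of_le (Finset.le_sup hn)
      · rw [Finset.mem_piAntidiag]
        exact ⟨rfl, fun i _ => Finset.mem_univ i⟩
    have hg0 : ∀ n, 0 ≤ g n := by
      intro n
      apply mul_nonneg hKpos.le
      apply mul_nonneg (Nat.cast_nonneg _)
      exact Finset.prod_nonneg fun i _ => pow_nonneg (hx0 i) _
    have hdisj : ∀ m₁ ∈ Finset.range (M+1), ∀ m₂ ∈ Finset.range (M+1), m₁ ≠ m₂ →
        Disjoint (Finset.piAntidiag (Finset.univ : Finset (Fin (2*N+1))) m₁)
          (Finset.piAntidiag (Finset.univ : Finset (Fin (2*N+1))) m₂) := by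
      intro m₁ _ m₂ _ hne
      rw [Finset.disjoint_left]
      intro n h1 h2
      rw [Finset.mem_piAntidiag] at h1 h2
      exact hne (h1.1 ▸ h2.1)
    calc ∑ n ∈ u, g n
        ≤ ∑ n ∈ (Finset.range (M+1)).biUnion
            (fun m => Finset.piAntidiag (Finset.univ : Finset (Fin (2*N+1))) m), g n :=
          Finset.sum_le_sum_of_subset_of_nonneg hsub (fun n _ _ => hg0 n)
      _ = ∑ m ∈ Finset.range (M+1), ∑ n ∈ Finset.piAntidiag
            (Finset.univ : Finset (Fin (2*N+1))) m, g n := Finset.sum_biUnion hdisj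
      _ = ∑ m ∈ Finset.range (M+1), K * S ^ m := by
          exact Finset.sum_congr rfl fun m _ => hslice m
      _ = K * ∑ m ∈ Finset.range (M+1), S ^ m := by rw [Finset.mul_sum]
      _ ≤ K / (1 - S) := by
          rw [div_eq_mul_inv]
          apply mul_le_mul_of_nonneg_left _ hKpos.le
          have h1S : 0 < 1 - S := by linarith
          rw [geom_sum_eq (by linarith : S ≠ 1)]
          rw [← neg_div_neg_eq]
          simp only [neg_sub]
          rw [div_le_iff₀ h1S, inv_mul_cancel₀ h1S.ne']
          have : S ^ (M+1) ≥ 0 := pow_nonneg hS0 _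
          linarith
  have hfbound : ∀ u : Finset (Fin (2*N+1) → ℕ), ∑ n ∈ u, f n ≤ K / (1 - S) := by
    intro u
    calc ∑ n ∈ u, f n ≤ ∑ n ∈ u, g n := Finset.sum_le_sum fun n _ => hfg n
      _ ≤ K / (1 - S) := hgbound u
  have hsummable : Summable f := summable_of_sum_le hf0 hfbound
  exact ⟨hsummable, Summable.tsum_le_of_sum_le hsummable hfbound⟩
end

section
/- Let N ≥ 2 be an integer and let f₀, f₁, …, f_{2N} : ℂ \ {0} → ℂ be holomorphic functions satisfying: (1/(2N))·z·f_i′(z) = f_{i+1}(z) for all z ≠ 0 and 0 ≤ i ≤ 2N−2; (1/(2N))·z·f_{2N−1}′(z) = f_{2N}(z) + 2·f₀(z)·z^{−2N} for all z ≠ 0; and (1/(2N))·z·f_{2N}′(z) = 2·f₁(z)·z^{−2N} for all z ≠ 0. Let D denote the operator sending a function g to z ↦ z·g′(z). Then: f_i = (2N)^{−i}·D^i f₀ for 0 ≤ i ≤ 2N−1; f_{2N}(z) = (2N)^{−2N}·(D^{2N} f₀)(z) − 2·f₀(z)·z^{−2N} for all z ≠ 0; and (D^{2N+1} f₀)(z)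 = (2N)^{2N}·z^{−2N}·(4·z·f₀′(z) − 4N·f₀(z)) for all z ≠ 0. -/
/-!
Unwinding the first `2N - 1` equations expresses each `f i` through `Dⁱ f₀`, and the equation
for `f_{2N-1}` then gives `f_{2N}`. Applying `D` once more to
`D^{2N} f₀ = (2N)^{2N} (f_{2N} + 2 f₀ z^{-2N})`, the last equation turns `D f_{2N}` into
`2 D f₀ · z^{-2N}`, while `D (f₀ z^{-2N}) = (D f₀ - 2N f₀) z^{-2N}` since `D z^k = k z^k`.
-/

/-- The operator `D = z·d/dz` on functions on `ℂ`. -/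
noncomputable def Dop : (ℂ → ℂ) → (ℂ → ℂ) := fun g z => z * deriv g z

open Set

theorem eqOn_Dop_of_eqOn {s : Set ℂ} (hs : IsOpen s) {g h : ℂ → ℂ} (hgh : EqOn g h s) :
    EqOn (Dop g) (Dop h) s := fun z hz => by
  simp only [Dop, (hgh.eventuallyEq_of_mem (hs.mem_nhds hz)).deriv_eq]

theorem Dop_const_mul (c : ℂ) (g : ℂ → ℂ) (z : ℂ) :
    Dop (fun w => c * g w) z = c * Dop g z := by
  simp only [Dop, deriv_const_mul_field]
  ring

theorem Dop_div_const (g : ℂ → ℂ) (c : ℂ) (z : ℂ) :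
    Dop (fun w => g w / c) z = Dop g z / c := by
  simp only [Dop, deriv_div_const]
  ring

theorem Dop_add {g h : ℂ → ℂ} {z : ℂ} (hg : DifferentiableAt ℂ g z)
    (hh : DifferentiableAt ℂ h z) : Dop (fun w => g w + h w) z = Dop g z + Dop h z := by
  simp only [Dop, deriv_fun_add hg hh]
  ring

theorem Dop_div_pow {g : ℂ → ℂ} {z : ℂ} (hg : DifferentiableAt ℂ g z) (hz : z ≠ 0) (n : ℕ) :
    Dop (fun w => g w / w ^ n) z = (Dop g z - n * g z) / z ^ n := by
  simp only [Dop]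
  rw [deriv_fun_div hg (differentiableAt_pow n) (pow_ne_zero n hz), deriv_pow_field]
  cases n with
  | zero => simp
  | succ k =>
    rw [Nat.add_sub_cancel]
    field_simp
    ring

theorem one_div_mul_mul_deriv_eq_Dop_div (c : ℂ) (g : ℂ → ℂ) (z : ℂ) :
    1 / c * z * deriv g z = Dop g z / c := by
  simp only [Dop]
  ring

theorem eqOn_Dop_div_iterate_succ {s : Set ℂ} (hs : IsOpen s) {g f₀ : ℂ → ℂ} {c : ℂ} {i : ℕ}
    (hg : EqOn g (fun z => Dop^[i] f₀ z / c ^ i) s) :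
    EqOn (fun z => Dop g z / c) (fun z => Dop^[i + 1] f₀ z / c ^ (i + 1)) s := by
  intro z hz
  simp only [eqOn_Dop_of_eqOn hs hg hz, Dop_div_const, Function.iterate_succ_apply', pow_succ,
    div_div]

theorem eqOn_iterate_Dop_div_pow {s : Set ℂ} (hs : IsOpen s) {f : ℕ → ℂ → ℂ} {c : ℂ} {n : ℕ}
    (hf : ∀ i < n, EqOn (f (i + 1)) (fun z => Dop (f i) z / c) s) :
    ∀ i ≤ n, EqOn (f i) (fun z => Dop^[i] (f 0) z / c ^ i) s := by
  intro i hi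
  induction i with
  | zero => intro z _; simp
  | succ i ih => exact (hf i hi).trans (eqOn_Dop_div_iterate_succ hs (ih (by omega)))

theorem Dop_iterate_succ_of_eqOn {s : Set ℂ} (hs : IsOpen s) {f₀ g : ℂ → ℂ} {a b : ℂ} {n : ℕ}
    {z : ℂ} (hzs : z ∈ s) (hz : z ≠ 0) (hf₀ : DifferentiableAt ℂ f₀ z)
    (hg : DifferentiableAt ℂ g z)
    (h : EqOn (Dop^[n] f₀) (fun w => a * (g w + b * (f₀ w / w ^ n))) s) :
    Dop^[n + 1] f₀ z = a * (Dop g z + b * ((Dop f₀ z - n * f₀ z) / z ^ n)) := by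
  have hq : DifferentiableAt ℂ (fun w => b * (f₀ w / w ^ n)) z :=
    (hf₀.div (differentiableAt_pow n) (pow_ne_zero n hz)).const_mul b
  rw [Function.iterate_succ_apply', eqOn_Dop_of_eqOn hs h hzs, Dop_const_mul, Dop_add hg hq,
    Dop_const_mul, Dop_div_pow hf₀ hz]

/-- (Lemma 6.4 of the paper.) If the holomorphic functions
`f₀, …, f_{2N}` on `ℂ \ {0}` satisfy the component equations of the flatness equation
for the Dubrovin connection of `Q_{2N}` at the origin, then `f_i = (2N)^{−i} Dⁱ f₀` for
`0 ≤ i ≤ 2N−1`, `f_{2N} = (2N)^{−2N} D^{2N} f₀ − 2 f₀ z^{−2N}`, and `f₀` satisfies the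
scalar quantum differential equation
`D^{2N+1} f₀ = (2N)^{2N} z^{−2N} (4 z f₀′ − 4N f₀)`. -/
theorem stmt_12 (N : ℕ) (hN : 2 ≤ N) (f : ℕ → ℂ → ℂ)
    (hf : ∀ i ≤ 2*N, DifferentiableOn ℂ (f i) {(0 : ℂ)}ᶜ)
    (h1 : ∀ i ≤ 2*N - 2, ∀ z : ℂ, z ≠ 0 →
      (1 / (2*N : ℂ)) * z * deriv (f i) z = f (i+1) z)
    (h2 : ∀ z : ℂ, z ≠ 0 →
      (1 / (2*N : ℂ)) * z * deriv (f (2*N - 1)) z = f (2*N) z + 2 * f 0 z / z ^ (2*N))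
    (h3 : ∀ z : ℂ, z ≠ 0 →
      (1 / (2*N : ℂ)) * z * deriv (f (2*N)) z = 2 * f 1 z / z ^ (2*N)) :
    (∀ i ≤ 2*N - 1, ∀ z : ℂ, z ≠ 0 → f i z = (Dop^[i] (f 0)) z / (2*N : ℂ) ^ i) ∧
    (∀ z : ℂ, z ≠ 0 →
      f (2*N) z = (Dop^[2*N] (f 0)) z / (2*N : ℂ) ^ (2*N) - 2 * f 0 z / z ^ (2*N)) ∧
    (∀ z : ℂ, z ≠ 0 → (Dop^[2*N+1] (f 0)) z
      = (2*N : ℂ) ^ (2*N) / z ^ (2*N) * (4 * z * deriv (f 0) z - 4*(N : ℂ) * f 0 z)) := by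
  have hN0 : (N : ℂ) ≠ 0 := by norm_cast; omega
  have hU : IsOpen ({0}ᶜ : Set ℂ) := isOpen_compl_singleton
  simp only [one_div_mul_mul_deriv_eq_Dop_div] at h1 h2 h3
  have hf_lt : ∀ i ≤ 2*N - 1, EqOn (f i) (fun z => Dop^[i] (f 0) z / (2*N : ℂ) ^ i) {0}ᶜ :=
    eqOn_iterate_Dop_div_pow hU fun i hi z hz => (h1 i (by omega) z hz).symm
  have hf_top : ∀ z : ℂ, z ≠ 0 →
      f (2*N) z = Dop^[2*N] (f 0) z / (2*N : ℂ) ^ (2*N) - 2 * f 0 z / z ^ (2*N) := by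
    intro z hz
    have hD := eqOn_Dop_div_iterate_succ hU (hf_lt (2*N - 1) le_rfl) hz
    simp only [Nat.sub_add_cancel (by omega : 1 ≤ 2*N), h2 z hz] at hD
    exact eq_sub_of_add_eq hD
  refine ⟨fun i hi z hz => hf_lt i hi hz, hf_top, fun z hz => ?_⟩
  have hdiff : ∀ i ≤ 2*N, DifferentiableAt ℂ (f i) z :=
    fun i hi => (hf i hi).differentiableAt (hU.mem_nhds hz)
  have hD_top : EqOn (Dop^[2*N] (f 0))
      (fun w => (2*N : ℂ) ^ (2*N) * (f (2*N) w + 2 * (f 0 w / w ^ (2*N)))) {0}ᶜ := by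
    intro w hw
    dsimp only
    rw [hf_top w hw]
    field_simp
    ring
  have hDf_top : Dop (f (2*N)) z = 2 * Dop (f 0) z / z ^ (2*N) := by
    have h := h3 z hz
    rw [hf_lt 1 (by omega) hz, Function.iterate_one] at h
    field_simp at h ⊢
    linear_combination h
  rw [Dop_iterate_succ_of_eqOn hU hz hz (hdiff 0 (by omega)) (hdiff _ le_rfl) hD_top, hDf_top, Dop]
  push_cast
  field_simp
  ring
end

section
/- Let c ∈ ℂ and p ∈ ℕ, and let D denote the operator sending a differentiable function g : ℂ \ {0} → ℂ to z ↦ z·g′(z). Then z^p · exp(c/z) · (D^p (λ ↦ exp(−c/λ)))(z) tends to c^p as z → 0 with z ∈ ℂ \ {0}. -/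
/-!
Writing `Dᵖ e^{-c/z} = Qₚ(z) z⁻ᵖ e^{-c/z}`, differentiating gives the recursion
`Qₙ₊₁ = (c - n z) Qₙ + z² Qₙ'`, so each `Qₙ` is a polynomial with `Qₙ(0) = cⁿ`.
Hence `zᵖ e^{c/z} Dᵖ e^{-c/z} = Qₚ(z)` for `z ≠ 0`, which tends to `Qₚ(0) = cᵖ`.
-/

open Polynomial Filter Topology

noncomputable def expNegDivPoly (c : ℂ) : ℕ → ℂ[X]
  | 0 => 1
  | n + 1 => (C c - C (n : ℂ) * X) * expNegDivPoly c n + X ^ 2 * derivative (expNegDivPoly c n)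

lemma expNegDivPoly_eval_zero (c : ℂ) (n : ℕ) : (expNegDivPoly c n).eval 0 = c ^ n := by
  induction n with
  | zero => simp [expNegDivPoly]
  | succ n ih => simp [expNegDivPoly, ih, pow_succ, mul_comm]

lemma Filter.EventuallyEq.Dop_eq {f g : ℂ → ℂ} {z : ℂ} (h : f =ᶠ[𝓝 z] g) : Dop f z = Dop g z := by
  simp only [Dop, h.deriv_eq]

lemma Dop_eval_div_pow_mul_exp_neg_div (c : ℂ) (Q : ℂ[X]) (n : ℕ) {z : ℂ} (hz : z ≠ 0) :
    Dop (fun w => Q.eval w / w ^ n * Complex.exp (-c / w)) z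
      = ((C c - C (n : ℂ) * X) * Q + X ^ 2 * derivative Q).eval z / z ^ (n + 1)
          * Complex.exp (-c / z) := by
  have hdiv : HasDerivAt (fun w => -c / w) (c / z ^ 2) z := by
    simpa [div_eq_mul_inv] using (hasDerivAt_inv hz).const_mul (-c)
  have hpow : HasDerivAt (fun w => w ^ n) (n * z ^ n / z) z := by
    refine (hasDerivAt_pow n z).congr_deriv ?_
    rcases eq_or_ne n 0 with rfl | hn
    · simp
    · rw [← pow_sub_one_mul hn z]
      field_simp
  have hderiv := ((Q.hasDerivAt z).fun_div hpow (pow_ne_zero n hz)).fun_mul hdiv.cexp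
  rw [Dop, hderiv.deriv]
  simp only [eval_add, eval_mul, eval_sub, eval_C, eval_X, eval_pow]
  field_simp
  ring

lemma iterate_Dop_exp_neg_div (c : ℂ) (n : ℕ) :
    Set.EqOn (Dop^[n] fun w => Complex.exp (-c / w))
      (fun w => (expNegDivPoly c n).eval w / w ^ n * Complex.exp (-c / w)) {0}ᶜ := by
  induction n with
  | zero => intro z _; simp [expNegDivPoly]
  | succ n ih =>
    intro z hz
    rw [Function.iterate_succ_apply',
      (ih.eventuallyEq_of_mem (isOpen_compl_singleton.mem_nhds hz)).Dop_eq,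
      Dop_eval_div_pow_mul_exp_neg_div c _ n hz]
    rfl

/-- For `c ∈ ℂ` and `p ∈ ℕ`,
`z^p · e^{c/z} · (D^p e^{−c/·})(z) → c^p` as `z → 0` through nonzero values
(the computation `z^p e^{c/z}(z∂_z)^p(e^{−c/z}) = c^p + o(1)` from Lemma 6.9 of
the paper). -/
theorem stmt_14 (c : ℂ) (p : ℕ) :
    Filter.Tendsto
      (fun z : ℂ => z ^ p * Complex.exp (c / z)
        * (Dop^[p] (fun w : ℂ => Complex.exp (-c / w))) z)
      (nhdsWithin 0 {(0 : ℂ)}ᶜ) (nhds (c ^ p)) := by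
  have hQ : (fun z => (expNegDivPoly c p).eval z) =ᶠ[𝓝[≠] 0]
      fun z => z ^ p * Complex.exp (c / z) * (Dop^[p] fun w => Complex.exp (-c / w)) z := by
    filter_upwards [self_mem_nhdsWithin] with z (hz : z ≠ 0)
    rw [iterate_Dop_exp_neg_div c p hz]
    dsimp only
    rw [neg_div, Complex.exp_neg]
    field_simp
  rw [← expNegDivPoly_eval_zero c p]
  exact ((expNegDivPoly c p).continuousAt.tendsto.mono_left nhdsWithin_le_nhds).congr' hQ
end
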